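/- arXiv:1412.6803 — 6 statements merged into one kernel-verified Lean document; each statement's English description precedes it below -/
import Mathlib

section
/- Let k ≥ 9 be an integer and let G be a finite simple graph with Δ(G) ≤ k. Suppose G contains a vertex v of degree 3 having at least one neighbor of degree at most Δ(G) − 1. If G − v admits an incidence (k+4, 4)-coloring, then G admits an incidence (k+4, 4)-coloring. -/
open SimpleGraph

/-- An incidence coloring of `G` with `n` colors, where `φ v u` is the color of the
incidence `(v, vu)` (meaningful when `G.Adj v u`): two distinct adjacent incidences
`(v, vu)` and `(w, wx)` receive distinct colors. Incidences `(v, e)` and `(w, f)` are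
adjacent if `v = w`, or `e = f`, or the edge `vw` equals `e` or `f`. -/
def IsIncidenceColoring {V : Type*} (G : SimpleGraph V) {n : ℕ} (φ : V → V → Fin n) : Prop :=
  ∀ ⦃v u w x : V⦄, G.Adj v u → G.Adj w x → (v, u) ≠ (w, x) →
    (v = w ∨ s(v, u) = s(w, x) ∨ s(v, w) = s(v, u) ∨ s(v, w) = s(w, x)) →
    φ v u ≠ φ w x

/-- `G` admits an incidence `(n, ℓ)`-coloring: an incidence coloring with `n` colors such
that for every vertex `v`, at most `ℓ` distinct colors appear on the incidences of the
form `(u, uv)` where `u` ranges over the neighbors of `v`. -/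
def HasIncidenceColoring {V : Type*} (G : SimpleGraph V) (n ℓ : ℕ) : Prop :=
  ∃ φ : V → V → Fin n, IsIncidenceColoring G φ ∧
    ∀ v : V, ({c : Fin n | ∃ u : V, G.Adj u v ∧ φ u v = c}).ncard ≤ ℓ

/-- The incidence chromatic number: the least `n` such that `G` admits an incidence
`n`-coloring. -/
noncomputable def incChromaticNumber {V : Type*} (G : SimpleGraph V) : ℕ :=
  sInf {n : ℕ | ∃ φ : V → V → Fin n, IsIncidenceColoring G φ}

/-- `mad(G) < q`: every nonempty subgraph `H` of `G` satisfies `2|E(H)| < q·|V(H)|`. -/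
def MadLT {V : Type*} (G : SimpleGraph V) (q : ℝ) : Prop :=
  ∀ H : G.Subgraph, H.verts.Nonempty →
    (2 * H.edgeSet.ncard : ℝ) < q * H.verts.ncard

section ComboLemma

open Finset

private lemma combo {α : Type*} [DecidableEq α] (B1 B2 B3 F1 F2 F3 : Finset α)
    (hd1 : Disjoint B1 F1) (hd2 : Disjoint B2 F2) (hd3 : Disjoint B3 F3)
    (hB1 : B1.card ≤ 4) (hB2 : B2.card ≤ 4) (hB3 : B3.card ≤ 4)
    (h1 : 6 ≤ (B1 ∪ F1).card) (h2 : 5 ≤ (B2 ∪ F2).card) (h3 : 5 ≤ (B3 ∪ F3).card) :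
    ∃ a1 a2 a3 : α, a1 ∈ B1 ∪ F1 ∧ a2 ∈ B2 ∪ F2 ∧ a3 ∈ B3 ∪ F3 ∧
      a1 ≠ a2 ∧ a1 ≠ a3 ∧ a2 ≠ a3 ∧
      (B1.card = 4 → a1 ∈ B1) ∧ (B2.card = 4 → a2 ∈ B2) ∧ (B3.card = 4 → a3 ∈ B3) ∧
      (F1 \ {a1, a2, a3}).Nonempty ∧ (F2 \ {a1, a2, a3}).Nonempty ∧
      (F3 \ {a1, a2, a3}).Nonempty := by
  have hc1 : (B1 ∪ F1).card = B1.card + F1.card := card_union_of_disjoint hd1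
  have hc2 : (B2 ∪ F2).card = B2.card + F2.card := card_union_of_disjoint hd2
  have hc3 : (B3 ∪ F3).card = B3.card + F3.card := card_union_of_disjoint hd3
  obtain ⟨f1, hf1⟩ : F1.Nonempty := card_pos.mp (by omega)
  obtain ⟨f2, hf2⟩ : F2.Nonempty := card_pos.mp (by omega)
  obtain ⟨f3, hf3⟩ : F3.Nonempty := card_pos.mp (by omega)
  have hf1nB1 : f1 ∉ B1 := fun h => disjoint_left.mp hd1 h hf1
  have hf2nB2 : f2 ∉ B2 := fun h => disjoint_left.mp hd2 h hf2
  have hf3nB3 : f3 ∉ B3 := fun h => disjoint_left.mp hd3 h hf3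
  set S : Finset α := {f1, f2, f3} with hS
  have hf1S : f1 ∈ S := by simp [hS]
  have hf2S : f2 ∈ S := by simp [hS]
  have hf3S : f3 ∈ S := by simp [hS]
  have hScard : S.card ≤ 3 := by
    refine (card_insert_le _ _).trans ?_
    have := card_insert_le f2 ({f3} : Finset α)
    simp only [card_singleton] at this ⊢
    omega
  have hpair : ∀ g h : α, ({g, h} : Finset α).card ≤ 2 := by
    intro g h
    refine (card_insert_le _ _).trans ?_
    simp
  set P1 : Finset α := if B1.card = 4 then B1 else B1 ∪ F1 with hP1
  set P2 : Finset α := if B2.card = 4 then B2 else B2 ∪ F2 with hP2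
  set P3 : Finset α := if B3.card = 4 then B3 else B3 ∪ F3 with hP3
  have hP1sub : P1 ⊆ B1 ∪ F1 := by rw [hP1]; split <;> [exact subset_union_left; exact subset_refl _]
  have hP2sub : P2 ⊆ B2 ∪ F2 := by rw [hP2]; split <;> [exact subset_union_left; exact subset_refl _]
  have hP3sub : P3 ⊆ B3 ∪ F3 := by rw [hP3]; split <;> [exact subset_union_left; exact subset_refl _]
  have hP1four : B1.card = 4 → P1 = B1 := fun h => by rw [hP1, if_pos h]
  have hP2four : B2.card = 4 → P2 = B2 := fun h => by rw [hP2, if_pos h]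
  have hP3four : B3.card = 4 → P3 = B3 := fun h => by rw [hP3, if_pos h]
  set Q1 : Finset α := P1 \ S with hQ1
  set Q2 : Finset α := P2 \ S with hQ2
  set Q3 : Finset α := P3 \ S with hQ3
  -- generic cardinality bound for the Q's
  have hQgen : ∀ (B F : Finset α) (g h : α), Disjoint B F → B.card ≤ 4 →
      5 ≤ (B ∪ F).card → (B ∪ F).card = B.card + F.card →
      (∀ x ∈ S, x ∈ F ∨ x = g ∨ x = h) →
      2 ≤ ((if B.card = 4 then B else B ∪ F) \ S).card := by
    intro B F g h hd hB h5 hc hSsub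
    split
    · next hB4 =>
      have hsub : B ∩ S ⊆ {g, h} := by
        intro x hx
        rw [mem_inter] at hx
        rcases hSsub x hx.2 with hF | hg | hh
        · exact absurd hF (disjoint_left.mp hd hx.1)
        · simp [hg]
        · simp [hh]
      have h2' : (B ∩ S).card ≤ 2 := (card_le_card hsub).trans (hpair g h)
      have := card_inter_add_card_sdiff B S
      omega
    · have := le_card_sdiff S (B ∪ F)
      omega
  have hQ1card : 2 ≤ Q1.card := by
    rw [hQ1, hP1]
    refine hQgen B1 F1 f2 f3 hd1 hB1 (by omega) hc1 ?_
    intro x hx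
    rw [hS] at hx; simp only [mem_insert, mem_singleton] at hx
    rcases hx with h | h | h
    · exact Or.inl (h ▸ hf1)
    · exact Or.inr (Or.inl h)
    · exact Or.inr (Or.inr h)
  have hQ2card : 2 ≤ Q2.card := by
    rw [hQ2, hP2]
    refine hQgen B2 F2 f1 f3 hd2 hB2 h2 hc2 ?_
    intro x hx
    rw [hS] at hx; simp only [mem_insert, mem_singleton] at hx
    rcases hx with h | h | h
    · exact Or.inr (Or.inl h)
    · exact Or.inl (h ▸ hf2)
    · exact Or.inr (Or.inr h)
  have hQ3card : 2 ≤ Q3.card := by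
    rw [hQ3, hP3]
    refine hQgen B3 F3 f1 f2 hd3 hB3 h3 hc3 ?_
    intro x hx
    rw [hS] at hx; simp only [mem_insert, mem_singleton] at hx
    rcases hx with h | h | h
    · exact Or.inr (Or.inl h)
    · exact Or.inr (Or.inr h)
    · exact Or.inl (h ▸ hf3)
  have hQ1P : Q1 ⊆ P1 := sdiff_subset
  have hQ2P : Q2 ⊆ P2 := sdiff_subset
  have hQ3P : Q3 ⊆ P3 := sdiff_subset
  -- the standard finisher: three distinct elements taken from the Q's
  have finish : ∀ a1 a2 a3 : α, a1 ∈ Q1 → a2 ∈ Q2 → a3 ∈ Q3 →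
      a1 ≠ a2 → a1 ≠ a3 → a2 ≠ a3 →
      ∃ a1 a2 a3 : α, a1 ∈ B1 ∪ F1 ∧ a2 ∈ B2 ∪ F2 ∧ a3 ∈ B3 ∪ F3 ∧
      a1 ≠ a2 ∧ a1 ≠ a3 ∧ a2 ≠ a3 ∧
      (B1.card = 4 → a1 ∈ B1) ∧ (B2.card = 4 → a2 ∈ B2) ∧ (B3.card = 4 → a3 ∈ B3) ∧
      (F1 \ {a1, a2, a3}).Nonempty ∧ (F2 \ {a1, a2, a3}).Nonempty ∧
      (F3 \ {a1, a2, a3}).Nonempty := by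
    intro a1 a2 a3 ha1 ha2 ha3 h12 h13 h23
    obtain ⟨ha1P, ha1S⟩ := mem_sdiff.mp ha1
    obtain ⟨ha2P, ha2S⟩ := mem_sdiff.mp ha2
    obtain ⟨ha3P, ha3S⟩ := mem_sdiff.mp ha3
    have hsurv : ∀ f : α, f ∈ S → f ∉ ({a1, a2, a3} : Finset α) := by
      intro f hfS hmem
      simp only [mem_insert, mem_singleton] at hmem
      rcases hmem with h | h | h
      · exact ha1S (h ▸ hfS)
      · exact ha2S (h ▸ hfS)
      · exact ha3S (h ▸ hfS)
    exact ⟨a1, a2, a3, hP1sub ha1P, hP2sub ha2P, hP3sub ha3P, h12, h13, h23,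
      fun h => (hP1four h) ▸ ha1P, fun h => (hP2four h) ▸ ha2P, fun h => (hP3four h) ▸ ha3P,
      ⟨f1, mem_sdiff.mpr ⟨hf1, hsurv f1 hf1S⟩⟩,
      ⟨f2, mem_sdiff.mpr ⟨hf2, hsurv f2 hf2S⟩⟩,
      ⟨f3, mem_sdiff.mpr ⟨hf3, hsurv f3 hf3S⟩⟩⟩
  by_cases hA : (Q2 \ Q3).Nonempty
  · obtain ⟨x, hx⟩ := hA
    obtain ⟨hxQ2, hxQ3⟩ := mem_sdiff.mp hx
    obtain ⟨a1, ha1⟩ : (Q1 \ {x}).Nonempty := by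
      rw [← card_pos]
      have := le_card_sdiff ({x} : Finset α) Q1
      simp only [card_singleton] at this
      omega
    obtain ⟨ha1Q, ha1x⟩ := mem_sdiff.mp ha1
    rw [mem_singleton] at ha1x
    obtain ⟨a3, ha3⟩ : (Q3 \ {a1}).Nonempty := by
      rw [← card_pos]
      have := le_card_sdiff ({a1} : Finset α) Q3
      simp only [card_singleton] at this
      omega
    obtain ⟨ha3Q, ha3a1⟩ := mem_sdiff.mp ha3
    rw [mem_singleton] at ha3a1
    exact finish a1 x a3 ha1Q hxQ2 ha3Q ha1x (fun h => ha3a1 h.symm)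
      (fun h => hxQ3 (h ▸ ha3Q))
  by_cases hB : (Q3 \ Q2).Nonempty
  · obtain ⟨x, hx⟩ := hB
    obtain ⟨hxQ3, hxQ2⟩ := mem_sdiff.mp hx
    obtain ⟨a1, ha1⟩ : (Q1 \ {x}).Nonempty := by
      rw [← card_pos]
      have := le_card_sdiff ({x} : Finset α) Q1
      simp only [card_singleton] at this
      omega
    obtain ⟨ha1Q, ha1x⟩ := mem_sdiff.mp ha1
    rw [mem_singleton] at ha1x
    obtain ⟨a2, ha2⟩ : (Q2 \ {a1}).Nonempty := by
      rw [← card_pos]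
      have := le_card_sdiff ({a1} : Finset α) Q2
      simp only [card_singleton] at this
      omega
    obtain ⟨ha2Q, ha2a1⟩ := mem_sdiff.mp ha2
    rw [mem_singleton] at ha2a1
    exact finish a1 a2 x ha1Q ha2Q hxQ3 (fun h => ha2a1 h.symm) ha1x
      (fun h => hxQ2 (h ▸ ha2Q))
  have hQ23 : Q2 = Q3 := by
    rw [not_nonempty_iff_eq_empty, sdiff_eq_empty_iff_subset] at hA hB
    exact subset_antisymm hA hB
  by_cases hC : (Q1 \ Q2).Nonempty
  · obtain ⟨x, hx⟩ := hC
    obtain ⟨hxQ1, hxQ2⟩ := mem_sdiff.mp hx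
    obtain ⟨a2, ha2Q⟩ : Q2.Nonempty := card_pos.mp (by omega)
    obtain ⟨a3, ha3⟩ : (Q2 \ {a2}).Nonempty := by
      rw [← card_pos]
      have := le_card_sdiff ({a2} : Finset α) Q2
      simp only [card_singleton] at this
      omega
    obtain ⟨ha3Q, ha3a2⟩ := mem_sdiff.mp ha3
    rw [mem_singleton] at ha3a2
    exact finish x a2 a3 hxQ1 ha2Q (hQ23 ▸ ha3Q) (fun h => hxQ2 (h ▸ ha2Q))
      (fun h => hxQ2 (h ▸ ha3Q)) (fun h => ha3a2 h.symm)
  have hQ12 : Q1 ⊆ Q2 := by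
    rw [not_nonempty_iff_eq_empty, sdiff_eq_empty_iff_subset] at hC
    exact hC
  by_cases hD : 3 ≤ Q2.card
  · obtain ⟨a1, ha1Q⟩ : Q1.Nonempty := card_pos.mp (by omega)
    obtain ⟨a2, ha2⟩ : (Q2 \ {a1}).Nonempty := by
      rw [← card_pos]
      have := le_card_sdiff ({a1} : Finset α) Q2
      simp only [card_singleton] at this
      omega
    obtain ⟨ha2Q, ha2a1⟩ := mem_sdiff.mp ha2
    rw [mem_singleton] at ha2a1
    obtain ⟨a3, ha3⟩ : (Q2 \ {a1, a2}).Nonempty := by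
      rw [← card_pos]
      have h' := le_card_sdiff ({a1, a2} : Finset α) Q2
      have := hpair a1 a2
      omega
    obtain ⟨ha3Q, ha3m⟩ := mem_sdiff.mp ha3
    simp only [mem_insert, mem_singleton] at ha3m
    push_neg at ha3m
    exact finish a1 a2 a3 ha1Q ha2Q (hQ23 ▸ ha3Q) (fun h => ha2a1 h.symm)
      (fun h => ha3m.1 h.symm) (fun h => ha3m.2 h.symm)
  -- BAD CASE
  have hQ2c2 : Q2.card = 2 := by omega
  have hQ1eq : Q1 = Q2 := eq_of_subset_of_card_le hQ12 (by omega)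
  obtain ⟨p, q, hpq, hQ2pq⟩ := card_eq_two.mp hQ2c2
  have hpQ2 : p ∈ Q2 := by rw [hQ2pq]; simp
  have hqQ2 : q ∈ Q2 := by rw [hQ2pq]; simp
  have hpS : p ∉ S := (mem_sdiff.mp hpQ2).2
  have hqS : q ∉ S := (mem_sdiff.mp hqQ2).2
  have hB1c : B1.card = 4 := by
    by_contra h
    have h6 : 6 ≤ P1.card := by rw [hP1, if_neg h]; exact h1
    have := le_card_sdiff S P1
    rw [← hQ1] at this
    rw [hQ1eq, hQ2c2] at this
    omega
  have hP1B : P1 = B1 := hP1four hB1c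
  have hQ1B : B1 \ S = {p, q} := by
    rw [← hP1B, ← hQ1, hQ1eq, hQ2pq]
  have hpB1 : p ∈ B1 := by
    have : p ∈ B1 \ S := by rw [hQ1B]; simp
    exact (mem_sdiff.mp this).1
  have hqB1 : q ∈ B1 := by
    have : q ∈ B1 \ S := by rw [hQ1B]; simp
    exact (mem_sdiff.mp this).1
  have hBS1 : (B1 ∩ S).card = 2 := by
    have h' := card_inter_add_card_sdiff B1 S
    rw [hQ1B, card_pair hpq] at h'
    omega
  have hsubB1S : B1 ∩ S ⊆ {f2, f3} := by
    intro x hx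
    rw [mem_inter] at hx
    rw [hS] at hx
    simp only [mem_insert, mem_singleton] at hx ⊢
    rcases hx.2 with h | h | h
    · exact absurd (h ▸ hx.1) hf1nB1
    · exact Or.inl h
    · exact Or.inr h
  have hBSeq : B1 ∩ S = {f2, f3} :=
    eq_of_subset_of_card_le hsubB1S (by have := hpair f2 f3; omega)
  have hf2B1 : f2 ∈ B1 := by
    have : f2 ∈ B1 ∩ S := by rw [hBSeq]; simp
    exact (mem_inter.mp this).1
  have hf3B1 : f3 ∈ B1 := by
    have : f3 ∈ B1 ∩ S := by rw [hBSeq]; simp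
    exact (mem_inter.mp this).1
  have hf1f2 : f1 ≠ f2 := fun h => hf1nB1 (h ▸ hf2B1)
  have hf1f3 : f1 ≠ f3 := fun h => hf1nB1 (h ▸ hf3B1)
  have hf2f3 : f2 ≠ f3 := by
    intro h
    rw [h] at hBSeq
    rw [hBSeq] at hBS1
    simp at hBS1
  have hf1p : f1 ≠ p := fun h => hf1nB1 (h ▸ hpB1)
  have hf1q : f1 ≠ q := fun h => hf1nB1 (h ▸ hqB1)
  have hf2p : f2 ≠ p := fun h => hpS (h ▸ hf2S)
  have hf2q : f2 ≠ q := fun h => hqS (h ▸ hf2S)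
  have hf3p : f3 ≠ p := fun h => hpS (h ▸ hf3S)
  have hf3q : f3 ≠ q := fun h => hqS (h ▸ hf3S)
  have hpP2 : p ∈ B2 ∪ F2 := hP2sub (hQ2P hpQ2)
  have hqP3 : q ∈ B3 ∪ F3 := hP3sub (hQ3P (hQ23 ▸ hqQ2))
  have hpP3 : p ∈ B3 ∪ F3 := hP3sub (hQ3P (hQ23 ▸ hpQ2))
  have hpB2four : B2.card = 4 → p ∈ B2 := fun h => (hP2four h) ▸ (hQ2P hpQ2)
  have hqB3four : B3.card = 4 → q ∈ B3 := fun h => (hP3four h) ▸ (hQ3P (hQ23 ▸ hqQ2))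
  have hpB3four : B3.card = 4 → p ∈ B3 := fun h => (hP3four h) ▸ (hQ3P (hQ23 ▸ hpQ2))
  by_cases hE : (F2 \ {f2, p, q}).Nonempty
  · -- Option 1 : (f2, p, q)
    obtain ⟨x2, hx2⟩ := hE
    obtain ⟨hx2F, hx2m⟩ := mem_sdiff.mp hx2
    refine ⟨f2, p, q, mem_union_left _ hf2B1, hpP2, hqP3,
      hf2p, hf2q, hpq, fun _ => hf2B1, hpB2four, hqB3four, ?_, ?_, ?_⟩
    · refine ⟨f1, mem_sdiff.mpr ⟨hf1, ?_⟩⟩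
      simp only [mem_insert, mem_singleton]
      push_neg
      exact ⟨hf1f2, hf1p, hf1q⟩
    · exact ⟨x2, mem_sdiff.mpr ⟨hx2F, hx2m⟩⟩
    · refine ⟨f3, mem_sdiff.mpr ⟨hf3, ?_⟩⟩
      simp only [mem_insert, mem_singleton]
      push_neg
      exact ⟨fun h => hf2f3 h.symm, hf3p, hf3q⟩
  · have hE' : F2 ⊆ {f2, p, q} := by
      rw [not_nonempty_iff_eq_empty, sdiff_eq_empty_iff_subset] at hE
      exact hE
    have hf1B2 : f1 ∈ B2 := by
      by_cases hB2c : B2.card = 4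
      · have hP2B : P2 = B2 := hP2four hB2c
        have hQ2B : B2 \ S = {p, q} := by rw [← hP2B, ← hQ2, hQ2pq]
        have hBS2 : (B2 ∩ S).card = 2 := by
          have h' := card_inter_add_card_sdiff B2 S
          rw [hQ2B, card_pair hpq] at h'
          omega
        have hsub2 : B2 ∩ S ⊆ {f1, f3} := by
          intro x hx
          rw [mem_inter] at hx
          rw [hS] at hx
          simp only [mem_insert, mem_singleton] at hx ⊢
          rcases hx.2 with h | h | h
          · exact Or.inl h
          · exact absurd (h ▸ hx.1) hf2nB2
          · exact Or.inr h
        have hBSeq2 : B2 ∩ S = {f1, f3} :=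
          eq_of_subset_of_card_le hsub2 (by have := hpair f1 f3; omega)
        have : f1 ∈ B2 ∩ S := by rw [hBSeq2]; simp
        exact (mem_inter.mp this).1
      · have h5 : 5 ≤ P2.card := by rw [hP2, if_neg hB2c]; exact h2
        have hsub : P2 ⊆ insert p (insert q S) := by
          intro x hx
          by_cases hxS : x ∈ S
          · simp [hxS]
          · have : x ∈ Q2 := mem_sdiff.mpr ⟨hx, hxS⟩
            rw [hQ2pq] at this
            simp only [mem_insert, mem_singleton] at this
            rcases this with h | h <;> simp [h]
        have hbig : (insert p (insert q S)).card ≤ 5 := by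
          refine (card_insert_le _ _).trans ?_
          have := card_insert_le q S
          omega
        have hPeq : P2 = insert p (insert q S) :=
          eq_of_subset_of_card_le hsub (by omega)
        have hf1P2 : f1 ∈ P2 := by
          rw [hPeq]
          simp [hf1S]
        rcases mem_union.mp (hP2sub hf1P2) with h | h
        · exact h
        · have := hE' h
          simp only [mem_insert, mem_singleton] at this
          rcases this with h' | h' | h'
          · exact absurd h' hf1f2
          · exact absurd h' hf1p
          · exact absurd h' hf1q
    -- Option 3' : (q, f1, p)
    obtain ⟨x1, hx1⟩ : (F1 \ {f1}).Nonempty := by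
      rw [← card_pos]
      have := le_card_sdiff ({f1} : Finset α) F1
      simp only [card_singleton] at this
      omega
    obtain ⟨hx1F, hx1f1⟩ := mem_sdiff.mp hx1
    rw [mem_singleton] at hx1f1
    have hx1p : x1 ≠ p := fun h => disjoint_left.mp hd1 (h ▸ hpB1) hx1F
    have hx1q : x1 ≠ q := fun h => disjoint_left.mp hd1 (h ▸ hqB1) hx1F
    refine ⟨q, f1, p, mem_union_left _ hqB1, mem_union_left _ hf1B2, hpP3,
      fun h => hf1q h.symm, fun h => hpq h.symm, hf1p,
      fun _ => hqB1, fun _ => hf1B2, hpB3four, ?_, ?_, ?_⟩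
    · refine ⟨x1, mem_sdiff.mpr ⟨hx1F, ?_⟩⟩
      simp only [mem_insert, mem_singleton]
      push_neg
      exact ⟨hx1q, hx1f1, hx1p⟩
    · refine ⟨f2, mem_sdiff.mpr ⟨hf2, ?_⟩⟩
      simp only [mem_insert, mem_singleton]
      push_neg
      exact ⟨hf2q, fun h => hf1f2 h.symm, hf2p⟩
    · refine ⟨f3, mem_sdiff.mpr ⟨hf3, ?_⟩⟩
      simp only [mem_insert, mem_singleton]
      push_neg
      exact ⟨hf3q, fun h => hf1f3 h.symm, hf3p⟩


end ComboLemma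

theorem incidence_extend_three_vertex_k4 {V : Type*} [Fintype V] (G : SimpleGraph V)
    [DecidableRel G.Adj] (k : ℕ) (hk : 9 ≤ k) (hΔ : G.maxDegree ≤ k)
    (v : V) (hdv : G.degree v = 3)
    (hnb : ∃ w : V, G.Adj v w ∧ G.degree w ≤ G.maxDegree - 1)
    (hcol : HasIncidenceColoring (G.induce ({v}ᶜ : Set V)) (k + 4) 4) :
    HasIncidenceColoring G (k + 4) 4 := by
  classical
  obtain ⟨φ', hcol', hcard'⟩ := hcol
  obtain ⟨w1, hvw1, hdw1⟩ := hnb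
  -- the three neighbors of v
  have hw1mem : w1 ∈ G.neighborFinset v := (G.mem_neighborFinset v w1).mpr hvw1
  have hnbv : (G.neighborFinset v).card = 3 := hdv
  have hc2 : ((G.neighborFinset v).erase w1).card = 2 := by
    rw [Finset.card_erase_of_mem hw1mem, hnbv]
  obtain ⟨w2, w3, hw23, herase⟩ := Finset.card_eq_two.mp hc2
  have hw2e : w2 ∈ (G.neighborFinset v).erase w1 := by rw [herase]; simp
  have hw3e : w3 ∈ (G.neighborFinset v).erase w1 := by rw [herase]; simp
  have hw21 : w2 ≠ w1 := (Finset.mem_erase.mp hw2e).1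
  have hw31 : w3 ≠ w1 := (Finset.mem_erase.mp hw3e).1
  have hvw2 : G.Adj v w2 := (G.mem_neighborFinset v w2).mp (Finset.mem_erase.mp hw2e).2
  have hvw3 : G.Adj v w3 := (G.mem_neighborFinset v w3).mp (Finset.mem_erase.mp hw3e).2
  set W : Fin 3 → V := ![w1, w2, w3] with hWdef
  have hWadj : ∀ j, G.Adj v (W j) := by
    intro j
    fin_cases j
    · exact hvw1
    · exact hvw2
    · exact hvw3
  have hWne : ∀ j, W j ≠ v := fun j => (hWadj j).ne'
  have hWsurj : ∀ u, G.Adj v u → ∃ j, u = W j := by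
    intro u hu
    have humem : u ∈ G.neighborFinset v := (G.mem_neighborFinset v u).mpr hu
    by_cases h : u = w1
    · exact ⟨0, h⟩
    · have hue : u ∈ (G.neighborFinset v).erase w1 := Finset.mem_erase.mpr ⟨h, humem⟩
      rw [herase] at hue
      simp only [Finset.mem_insert, Finset.mem_singleton] at hue
      rcases hue with h | h
      exacts [⟨1, h⟩, ⟨2, h⟩]
  have hWinj : ∀ j j' : Fin 3, W j = W j' → j = j' := by
    intro j j' h
    fin_cases j <;> fin_cases j' <;>
      first
        | rfl
        | exact absurd h hw21.symm
        | exact absurd h hw31.symm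
        | exact absurd h hw23
        | exact absurd h.symm hw21.symm
        | exact absurd h.symm hw31.symm
        | exact absurd h.symm hw23
  -- degrees
  have hdegw1 : G.degree (W 0) ≤ k - 1 := by
    show G.degree w1 ≤ k - 1
    have h1 := G.degree_le_maxDegree w1
    omega
  have hdegWk : ∀ j, G.degree (W j) ≤ k := fun j => (G.degree_le_maxDegree _).trans hΔ
  -- the partial coloring on V
  set φ₀ : V → V → Fin (k + 4) := fun x y =>
    if h : x ≠ v ∧ y ≠ v then
      φ' ⟨x, Set.mem_compl_singleton_iff.mpr h.1⟩ ⟨y, Set.mem_compl_singleton_iff.mpr h.2⟩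
    else ⟨0, by omega⟩ with hφ₀def
  have hφ₀eq : ∀ (x y : V) (hx : x ≠ v) (hy : y ≠ v),
      φ₀ x y = φ' ⟨x, Set.mem_compl_singleton_iff.mpr hx⟩ ⟨y, Set.mem_compl_singleton_iff.mpr hy⟩ := by
    intro x y hx hy
    rw [hφ₀def]
    exact dif_pos ⟨hx, hy⟩
  -- the color sets
  set nb : Fin 3 → Finset V := fun j => (G.neighborFinset (W j)).erase v with hnbdef
  have hnbmem : ∀ j z, z ∈ nb j ↔ (z ≠ v ∧ G.Adj (W j) z) := by
    intro j z
    rw [hnbdef]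
    simp [Finset.mem_erase]
  set A : Fin 3 → Finset (Fin (k + 4)) := fun j => (nb j).image (fun z => φ₀ (W j) z) with hAdef
  set B : Fin 3 → Finset (Fin (k + 4)) := fun j => (nb j).image (fun u => φ₀ u (W j)) with hBdef
  set F : Fin 3 → Finset (Fin (k + 4)) :=
    fun j => Finset.univ \ (A j ∪ B j) with hFdef
  have hAmem : ∀ j z, z ≠ v → G.Adj (W j) z → φ₀ (W j) z ∈ A j := by
    intro j z hz hadj
    rw [hAdef]
    exact Finset.mem_image_of_mem _ ((hnbmem j z).mpr ⟨hz, hadj⟩)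
  have hBmem : ∀ j u, u ≠ v → G.Adj u (W j) → φ₀ u (W j) ∈ B j := by
    intro j u hu hadj
    rw [hBdef]
    exact Finset.mem_image_of_mem _ ((hnbmem j u).mpr ⟨hu, hadj.symm⟩)
  have hnbcard : ∀ j, (nb j).card = G.degree (W j) - 1 := by
    intro j
    rw [hnbdef]
    simp only []
    rw [Finset.card_erase_of_mem ((G.mem_neighborFinset _ v).mpr (hWadj j).symm)]
    rfl
  have hAcard : ∀ j, (A j).card ≤ G.degree (W j) - 1 := by
    intro j
    rw [hAdef]
    exact (Finset.card_image_le).trans (le_of_eq (hnbcard j))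
  have hA0card : (A 0).card ≤ k - 2 := by
    have h1 := hAcard 0
    have h2 := hdegw1
    omega
  have hA12card : ∀ j, (A j).card ≤ k - 1 := by
    intro j
    have h1 := hAcard j
    have h2 := hdegWk j
    omega
  -- B j is bounded by the (·,·→ W j) incoming colors of the old coloring
  have hBcard : ∀ j, (B j).card ≤ 4 := by
    intro j
    have hWm : (W j) ∈ ({v}ᶜ : Set V) := Set.mem_compl_singleton_iff.mpr (hWne j)
    have hsub : (↑(B j) : Set (Fin (k + 4))) ⊆
        {c : Fin (k+4) | ∃ u : ({v}ᶜ : Set V),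
          (G.induce ({v}ᶜ : Set V)).Adj u ⟨W j, hWm⟩ ∧ φ' u ⟨W j, hWm⟩ = c} := by
      intro c hc
      rw [Finset.mem_coe, hBdef] at hc
      obtain ⟨u, hu, hval⟩ := Finset.mem_image.mp hc
      obtain ⟨huv, huadj⟩ := (hnbmem j u).mp hu
      refine ⟨⟨u, Set.mem_compl_singleton_iff.mpr huv⟩, huadj.symm, ?_⟩
      rw [← hval, hφ₀eq u (W j) huv (hWne j)]
    calc (B j).card = (↑(B j) : Set (Fin (k + 4))).ncard := (Set.ncard_coe_finset _).symm
      _ ≤ _ := Set.ncard_le_ncard hsub (Set.toFinite _)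
      _ ≤ 4 := hcard' ⟨W j, hWm⟩
  -- A and B are disjoint
  have hABd : ∀ j, Disjoint (A j) (B j) := by
    intro j
    rw [Finset.disjoint_left]
    intro c hcA hcB
    rw [hAdef] at hcA
    rw [hBdef] at hcB
    obtain ⟨z, hz, hzval⟩ := Finset.mem_image.mp hcA
    obtain ⟨u, hu, huval⟩ := Finset.mem_image.mp hcB
    obtain ⟨hzv, hzadj⟩ := (hnbmem j z).mp hz
    obtain ⟨huv, huadj⟩ := (hnbmem j u).mp hu
    have hne : ((⟨W j, Set.mem_compl_singleton_iff.mpr (hWne j)⟩ : ({v}ᶜ : Set V)),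
        (⟨z, Set.mem_compl_singleton_iff.mpr hzv⟩ : ({v}ᶜ : Set V))) ≠
        ((⟨u, Set.mem_compl_singleton_iff.mpr huv⟩ : ({v}ᶜ : Set V)),
        (⟨W j, Set.mem_compl_singleton_iff.mpr (hWne j)⟩ : ({v}ᶜ : Set V))) := by
      intro h
      rw [Prod.ext_iff] at h
      have : z = W j := congrArg Subtype.val h.2
      exact hzadj.ne' this
    have hadj1 : (G.induce ({v}ᶜ : Set V)).Adj
        ⟨W j, Set.mem_compl_singleton_iff.mpr (hWne j)⟩
        ⟨z, Set.mem_compl_singleton_iff.mpr hzv⟩ := hzadj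
    have hadj2 : (G.induce ({v}ᶜ : Set V)).Adj
        ⟨u, Set.mem_compl_singleton_iff.mpr huv⟩
        ⟨W j, Set.mem_compl_singleton_iff.mpr (hWne j)⟩ := huadj.symm
    have := hcol' hadj1 hadj2 hne (Or.inr (Or.inr (Or.inr Sym2.eq_swap)))
    rw [← hφ₀eq (W j) z (hWne j) hzv, ← hφ₀eq u (W j) huv (hWne j), hzval, huval] at this
    exact this rfl
  have hBF : ∀ j, B j ∪ F j = Finset.univ \ A j := by
    intro j
    rw [hFdef]
    ext c
    simp only [Finset.mem_union, Finset.mem_sdiff, Finset.mem_univ, true_and]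
    constructor
    · rintro (h | h)
      · exact fun hA => Finset.disjoint_left.mp (hABd j) hA h
      · exact fun hA => h (Or.inl hA)
    · intro h
      by_cases hB : c ∈ B j
      · exact Or.inl hB
      · exact Or.inr (fun hm => hm.elim h hB)
  have hdBF : ∀ j, Disjoint (B j) (F j) := by
    intro j
    rw [Finset.disjoint_left]
    intro c hcB hcF
    rw [hFdef] at hcF
    exact (Finset.mem_sdiff.mp hcF).2 (Finset.mem_union_right _ hcB)
  have hBFcard : ∀ j, (B j ∪ F j).card = (k + 4) - (A j).card := by
    intro j
    rw [hBF j, Finset.card_sdiff_of_subset (Finset.subset_univ _), Finset.card_univ, Fintype.card_fin]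
  have hBF0 : 6 ≤ (B 0 ∪ F 0).card := by
    rw [hBFcard 0]
    have := hA0card
    omega
  have hBF1 : 5 ≤ (B 1 ∪ F 1).card := by
    rw [hBFcard 1]
    have := hA12card 1
    omega
  have hBF2 : 5 ≤ (B 2 ∪ F 2).card := by
    rw [hBFcard 2]
    have := hA12card 2
    omega
  obtain ⟨a1, a2, a3, hm1, hm2, hm3, h12, h13, h23, h4B1, h4B2, h4B3, hs1, hs2, hs3⟩ :=
    combo (B 0) (B 1) (B 2) (F 0) (F 1) (F 2) (hdBF 0) (hdBF 1) (hdBF 2)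
      (hBcard 0) (hBcard 1) (hBcard 2) hBF0 hBF1 hBF2
  obtain ⟨b1, hb1⟩ := hs1
  obtain ⟨b2, hb2⟩ := hs2
  obtain ⟨b3, hb3⟩ := hs3
  rw [Finset.mem_sdiff] at hb1 hb2 hb3
  set av : Fin 3 → Fin (k + 4) := ![a1, a2, a3] with havdef
  set bv : Fin 3 → Fin (k + 4) := ![b1, b2, b3] with hbvdef
  have haA : ∀ j, av j ∉ A j := by
    intro j
    have key : ∀ j' (a : Fin (k+4)), a ∈ B j' ∪ F j' → a ∉ A j' := by
      intro j' a ha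
      rw [hBF j'] at ha
      exact (Finset.mem_sdiff.mp ha).2
    fin_cases j
    exacts [key 0 a1 hm1, key 1 a2 hm2, key 2 a3 hm3]
  have ha4 : ∀ j, (B j).card = 4 → av j ∈ B j := by
    intro j
    fin_cases j
    exacts [h4B1, h4B2, h4B3]
  have hainj : ∀ j j' : Fin 3, j ≠ j' → av j ≠ av j' := by
    intro j j' hne
    fin_cases j <;> fin_cases j' <;>
      first
        | exact absurd rfl hne
        | exact h12
        | exact h13
        | exact h23
        | exact h12.symm
        | exact h13.symm
        | exact h23.symm
  have hbF : ∀ j, bv j ∈ F j := by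
    intro j
    fin_cases j
    exacts [hb1.1, hb2.1, hb3.1]
  have hbnAB : ∀ j, bv j ∉ A j ∧ bv j ∉ B j := by
    intro j
    have := hbF j
    rw [hFdef] at this
    have h' := (Finset.mem_sdiff.mp this).2
    exact ⟨fun h => h' (Finset.mem_union_left _ h), fun h => h' (Finset.mem_union_right _ h)⟩
  have hbav : ∀ j j', bv j ≠ av j' := by
    have key : ∀ x : Fin (k+4), x ∉ ({a1, a2, a3} : Finset (Fin (k+4))) →
        ∀ j', x ≠ av j' := by
      intro x hx j'
      simp only [Finset.mem_insert, Finset.mem_singleton] at hx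
      push_neg at hx
      fin_cases j'
      exacts [hx.1, hx.2.1, hx.2.2]
    intro j j'
    fin_cases j
    exacts [key b1 hb1.2 j', key b2 hb2.2 j', key b3 hb3.2 j']
  -- the extended coloring
  set ψ : V → V → Fin (k + 4) := fun x y =>
    if x = v then (if y = W 0 then av 0 else if y = W 1 then av 1 else av 2)
    else if y = v then (if x = W 0 then bv 0 else if x = W 1 then bv 1 else bv 2)
    else φ₀ x y with hψdef
  have hW01 : W 0 ≠ W 1 := fun h => (by decide : (0 : Fin 3) ≠ 1) (hWinj _ _ h)
  have hW02 : W 0 ≠ W 2 := fun h => (by decide : (0 : Fin 3) ≠ 2) (hWinj _ _ h)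
  have hW12 : W 1 ≠ W 2 := fun h => (by decide : (1 : Fin 3) ≠ 2) (hWinj _ _ h)
  have hψa0 : ψ v (W 0) = av 0 := by rw [hψdef]; simp
  have hψa1 : ψ v (W 1) = av 1 := by rw [hψdef]; simp [hW01.symm]
  have hψa2 : ψ v (W 2) = av 2 := by rw [hψdef]; simp [hW02.symm, hW12.symm]
  have hψa : ∀ j, ψ v (W j) = av j := by
    intro j; fin_cases j; exacts [hψa0, hψa1, hψa2]
  have hψb0 : ψ (W 0) v = bv 0 := by rw [hψdef]; simp [hWne 0]
  have hψb1 : ψ (W 1) v = bv 1 := by rw [hψdef]; simp [hWne 1, hW01.symm]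
  have hψb2 : ψ (W 2) v = bv 2 := by rw [hψdef]; simp [hWne 2, hW02.symm, hW12.symm]
  have hψb : ∀ j, ψ (W j) v = bv j := by
    intro j; fin_cases j; exacts [hψb0, hψb1, hψb2]
  have hψold : ∀ x y : V, x ≠ v → y ≠ v → ψ x y = φ₀ x y := by
    intro x y hx hy; rw [hψdef]; simp [hx, hy]
  -- lifting Sym2 equalities to the subtype
  have s2l : ∀ (a b c d : V) (ha : a ≠ v) (hb : b ≠ v) (hc : c ≠ v) (hd : d ≠ v),
      s(a, b) = s(c, d) →
      s((⟨a, Set.mem_compl_singleton_iff.mpr ha⟩ : ({v}ᶜ : Set V)),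
        (⟨b, Set.mem_compl_singleton_iff.mpr hb⟩ : ({v}ᶜ : Set V))) =
      s((⟨c, Set.mem_compl_singleton_iff.mpr hc⟩ : ({v}ᶜ : Set V)),
        (⟨d, Set.mem_compl_singleton_iff.mpr hd⟩ : ({v}ᶜ : Set V))) := by
    intro a b c d ha hb hc hd h
    rw [Sym2.eq_iff] at h ⊢
    rcases h with ⟨h1, h2⟩ | ⟨h1, h2⟩
    · exact Or.inl ⟨Subtype.ext h1, Subtype.ext h2⟩
    · exact Or.inr ⟨Subtype.ext h1, Subtype.ext h2⟩
  have hKold : ∀ p1 q1 p2 q2 : V, G.Adj p1 q1 → G.Adj p2 q2 →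
      p1 ≠ v → q1 ≠ v → p2 ≠ v → q2 ≠ v → (p1, q1) ≠ (p2, q2) →
      (p1 = p2 ∨ s(p1, q1) = s(p2, q2) ∨ s(p1, p2) = s(p1, q1) ∨ s(p1, p2) = s(p2, q2)) →
      ψ p1 q1 ≠ ψ p2 q2 := by
    intro p1 q1 p2 q2 h1 h2 hp1 hq1 hp2 hq2 hne hd
    rw [hψold p1 q1 hp1 hq1, hψold p2 q2 hp2 hq2,
      hφ₀eq p1 q1 hp1 hq1, hφ₀eq p2 q2 hp2 hq2]
    have hadj1 : (G.induce ({v}ᶜ : Set V)).Adj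
        ⟨p1, Set.mem_compl_singleton_iff.mpr hp1⟩
        ⟨q1, Set.mem_compl_singleton_iff.mpr hq1⟩ := h1
    have hadj2 : (G.induce ({v}ᶜ : Set V)).Adj
        ⟨p2, Set.mem_compl_singleton_iff.mpr hp2⟩
        ⟨q2, Set.mem_compl_singleton_iff.mpr hq2⟩ := h2
    refine hcol' hadj1 hadj2 ?_ ?_
    · intro h
      rw [Prod.ext_iff] at h
      exact hne (Prod.ext (congrArg Subtype.val h.1) (congrArg Subtype.val h.2))
    · rcases hd with h | h | h | h
      · exact Or.inl (Subtype.ext h)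
      · exact Or.inr (Or.inl (s2l p1 q1 p2 q2 hp1 hq1 hp2 hq2 h))
      · exact Or.inr (Or.inr (Or.inl (s2l p1 p2 p1 q1 hp1 hp2 hp1 hq1 h)))
      · exact Or.inr (Or.inr (Or.inr (s2l p1 p2 p2 q2 hp1 hp2 hp2 hq2 h)))
  have hKao : ∀ (j : Fin 3) (p2 q2 : V), G.Adj p2 q2 → p2 ≠ v → q2 ≠ v →
      (v = p2 ∨ s(v, W j) = s(p2, q2) ∨ s(v, p2) = s(v, W j) ∨ s(v, p2) = s(p2, q2)) →
      ψ v (W j) ≠ ψ p2 q2 := by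
    intro j p2 q2 h2 hp2 hq2 hd
    rw [hψa j, hψold p2 q2 hp2 hq2]
    rcases hd with h | h | h | h
    · exact absurd h.symm hp2
    · rw [Sym2.eq_iff] at h
      rcases h with ⟨h1, _⟩ | ⟨h1, _⟩
      · exact absurd h1.symm hp2
      · exact absurd h1.symm hq2
    · rw [Sym2.eq_iff] at h
      rcases h with ⟨_, h2'⟩ | ⟨_, h2'⟩
      · intro heq
        apply haA j
        rw [heq, h2']
        exact hAmem j q2 hq2 (by rw [← h2']; exact h2)
      · exact absurd h2' hp2
    · rw [Sym2.eq_iff] at h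
      rcases h with ⟨h1, _⟩ | ⟨h1, _⟩
      · exact absurd h1.symm hp2
      · exact absurd h1.symm hq2
  have hKbo : ∀ (j : Fin 3) (p2 q2 : V), G.Adj p2 q2 → p2 ≠ v → q2 ≠ v →
      (W j = p2 ∨ s(W j, v) = s(p2, q2) ∨ s(W j, p2) = s(W j, v) ∨
        s(W j, p2) = s(p2, q2)) →
      ψ (W j) v ≠ ψ p2 q2 := by
    intro j p2 q2 h2 hp2 hq2 hd
    rw [hψb j, hψold p2 q2 hp2 hq2]
    rcases hd with h | h | h | h
    · intro heq
      apply (hbnAB j).1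
      rw [heq, ← h]
      exact hAmem j q2 hq2 (by rw [h]; exact h2)
    · rw [Sym2.eq_iff] at h
      rcases h with ⟨_, h2'⟩ | ⟨_, h2'⟩
      · exact absurd h2'.symm hq2
      · exact absurd h2'.symm hp2
    · rw [Sym2.eq_iff] at h
      rcases h with ⟨_, h2'⟩ | ⟨h1, _⟩
      · exact absurd h2' hp2
      · exact absurd h1 (hWne j)
    · rw [Sym2.eq_iff] at h
      rcases h with ⟨_, h2'⟩ | ⟨h1, _⟩
      · exact absurd h2' h2.ne
      · intro heq
        apply (hbnAB j).2
        rw [heq, ← h1]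
        exact hBmem j p2 hp2 (by rw [h1]; exact h2)
  have hdisymm : ∀ p1 q1 p2 q2 : V,
      (p1 = p2 ∨ s(p1, q1) = s(p2, q2) ∨ s(p1, p2) = s(p1, q1) ∨ s(p1, p2) = s(p2, q2)) →
      (p2 = p1 ∨ s(p2, q2) = s(p1, q1) ∨ s(p2, p1) = s(p2, q2) ∨ s(p2, p1) = s(p1, q1)) := by
    intro p1 q1 p2 q2 h
    rcases h with h | h | h | h
    · exact Or.inl h.symm
    · exact Or.inr (Or.inl h.symm)
    · refine Or.inr (Or.inr (Or.inr ?_))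
      rw [Sym2.eq_swap (a := p2) (b := p1)]
      exact h
    · refine Or.inr (Or.inr (Or.inl ?_))
      rw [Sym2.eq_swap (a := p2) (b := p1)]
      exact h
  refine ⟨ψ, ?_, ?_⟩
  · -- the incidence coloring property
    intro p1 q1 p2 q2 h1 h2 hne hd
    by_cases hp1 : p1 = v
    · obtain rfl : v = p1 := hp1.symm
      obtain ⟨j, rfl⟩ := hWsurj q1 h1
      by_cases hp2 : p2 = v
      · obtain rfl : v = p2 := hp2.symm
        obtain ⟨j', rfl⟩ := hWsurj q2 h2
        have hjj : j ≠ j' := by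
          intro h
          exact hne (by rw [h])
        rw [hψa j, hψa j']
        exact hainj j j' hjj
      · by_cases hq2 : q2 = v
        · obtain rfl : v = q2 := hq2.symm
          obtain ⟨j', rfl⟩ := hWsurj p2 h2.symm
          rw [hψa j, hψb j']
          exact (hbav j' j).symm
        · exact hKao j p2 q2 h2 hp2 hq2 hd
    · by_cases hq1 : q1 = v
      · obtain rfl : v = q1 := hq1.symm
        obtain ⟨j, rfl⟩ := hWsurj p1 h1.symm
        by_cases hp2 : p2 = v
        · obtain rfl : v = p2 := hp2.symm
          obtain ⟨j', rfl⟩ := hWsurj q2 h2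
          rw [hψb j, hψa j']
          exact hbav j j'
        · by_cases hq2 : q2 = v
          · obtain rfl : v = q2 := hq2.symm
            obtain ⟨j', rfl⟩ := hWsurj p2 h2.symm
            exfalso
            rcases hd with h | h | h | h
            · exact hne (by rw [h])
            · rw [Sym2.eq_iff] at h
              rcases h with ⟨ha, _⟩ | ⟨ha, _⟩
              · exact hne (by rw [ha])
              · exact hWne j ha
            · rw [Sym2.eq_iff] at h
              rcases h with ⟨_, hb⟩ | ⟨ha, _⟩
              · exact hWne j' hb
              · exact hWne j ha
            · rw [Sym2.eq_iff] at h
              rcases h with ⟨_, hb⟩ | ⟨ha, _⟩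
              · exact hWne j' hb
              · exact hWne j ha
          · exact hKbo j p2 q2 h2 hp2 hq2 hd
      · by_cases hp2 : p2 = v
        · obtain rfl : v = p2 := hp2.symm
          obtain ⟨j, rfl⟩ := hWsurj q2 h2
          exact (hKao j p1 q1 h1 hp1 hq1 (hdisymm p1 q1 v (W j) hd)).symm
        · by_cases hq2 : q2 = v
          · obtain rfl : v = q2 := hq2.symm
            obtain ⟨j, rfl⟩ := hWsurj p2 h2.symm
            exact (hKbo j p1 q1 h1 hp1 hq1 (hdisymm p1 q1 (W j) v hd)).symm
          · exact hKold p1 q1 p2 q2 h1 h2 hp1 hq1 hp2 hq2 hne hd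
  · -- the (·, 4) condition
    intro t
    by_cases ht : t = v
    · obtain rfl : v = t := ht.symm
      have hsub : {c : Fin (k + 4) | ∃ u, G.Adj u v ∧ ψ u v = c} ⊆
          (↑({bv 0, bv 1, bv 2} : Finset (Fin (k + 4))) : Set (Fin (k + 4))) := by
        rintro c ⟨u, hu, hc⟩
        obtain ⟨j, rfl⟩ := hWsurj u hu.symm
        rw [hψb j] at hc
        rw [← hc]
        fin_cases j <;> simp
      refine le_trans (le_trans (Set.ncard_le_ncard hsub (Set.toFinite _))
        (le_of_eq (Set.ncard_coe_finset _))) ?_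
      have h1 := Finset.card_insert_le (bv 0) ({bv 1, bv 2} : Finset (Fin (k + 4)))
      have h2 := Finset.card_insert_le (bv 1) ({bv 2} : Finset (Fin (k + 4)))
      have h3 : ({bv 2} : Finset (Fin (k + 4))).card = 1 := Finset.card_singleton _
      omega
    · by_cases hadj : G.Adj v t
      · obtain ⟨j, rfl⟩ := hWsurj t hadj
        have hsub : {c : Fin (k + 4) | ∃ u, G.Adj u (W j) ∧ ψ u (W j) = c} ⊆
            (↑(B j ∪ {av j}) : Set (Fin (k + 4))) := by
          rintro c ⟨u, hu, hc⟩
          by_cases huv : u = v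
          · obtain rfl : v = u := huv.symm
            rw [hψa j] at hc
            rw [← hc]
            exact Finset.mem_coe.mpr (Finset.mem_union_right _ (Finset.mem_singleton_self _))
          · rw [hψold u (W j) huv (hWne j)] at hc
            rw [← hc]
            exact Finset.mem_coe.mpr (Finset.mem_union_left _ (hBmem j u huv hu))
        have hcardle : (B j ∪ {av j}).card ≤ 4 := by
          by_cases h4 : (B j).card = 4
          · have hsub' : ({av j} : Finset (Fin (k + 4))) ⊆ B j :=
              Finset.singleton_subset_iff.mpr (ha4 j h4)
            rw [Finset.union_eq_left.mpr hsub']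
            omega
          · have hle := Finset.card_union_le (B j) ({av j} : Finset (Fin (k + 4)))
            have hb := hBcard j
            have h1 : ({av j} : Finset (Fin (k + 4))).card = 1 := Finset.card_singleton _
            omega
        exact le_trans (le_trans (Set.ncard_le_ncard hsub (Set.toFinite _))
          (le_of_eq (Set.ncard_coe_finset _))) hcardle
      · have htv : t ≠ v := ht
        have hsub : {c : Fin (k + 4) | ∃ u, G.Adj u t ∧ ψ u t = c} ⊆
            {c : Fin (k + 4) | ∃ u : ({v}ᶜ : Set V),
              (G.induce ({v}ᶜ : Set V)).Adj u ⟨t, Set.mem_compl_singleton_iff.mpr htv⟩ ∧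
              φ' u ⟨t, Set.mem_compl_singleton_iff.mpr htv⟩ = c} := by
          rintro c ⟨u, hu, hc⟩
          have huv : u ≠ v := fun h => hadj (h ▸ hu)
          refine ⟨⟨u, Set.mem_compl_singleton_iff.mpr huv⟩, hu, ?_⟩
          rw [← hc, hψold u t huv htv, hφ₀eq u t huv htv]
        exact le_trans (Set.ncard_le_ncard hsub (Set.toFinite _))
          (hcard' ⟨t, Set.mem_compl_singleton_iff.mpr htv⟩)
end

section
/- Let k ≥ 9 be an integer and let G be a finite simple graph with Δ(G) ≤ k. Suppose G contains two adjacent vertices u and v, each of degree 4. If G − uv admits an incidence (k+4, 4)-coloring, then G admits an incidence (k+4, 4)-coloring. -/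
open SimpleGraph

theorem incidence_extend_adjacent_four_vertices {V : Type*} [Fintype V] (G : SimpleGraph V)
    [DecidableRel G.Adj] (k : ℕ) (hk : 9 ≤ k) (hΔ : G.maxDegree ≤ k)
    (u v : V) (huv : G.Adj u v) (hdu : G.degree u = 4) (hdv : G.degree v = 4)
    (hcol : HasIncidenceColoring (G.deleteEdges {s(u, v)}) (k + 4) 4) :
    HasIncidenceColoring G (k + 4) 4 := by
  classical
  obtain ⟨φ, hφ, hℓ⟩ := hcol
  have hune : u ≠ v := huv.ne
  set Nu : Finset V := (G.neighborFinset u).erase v with hNu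
  set Nv : Finset V := (G.neighborFinset v).erase u with hNv
  have hNuc : Nu.card = 3 := by
    rw [hNu, Finset.card_erase_of_mem (by simpa using huv),
      SimpleGraph.card_neighborFinset_eq_degree, hdu]
  have hNvc : Nv.card = 3 := by
    rw [hNv, Finset.card_erase_of_mem (by simpa using huv.symm),
      SimpleGraph.card_neighborFinset_eq_degree, hdv]
  have memNu : ∀ w : V, G.Adj u w → w ≠ v → w ∈ Nu := by
    intro w h hne
    rw [hNu, Finset.mem_erase, SimpleGraph.mem_neighborFinset]
    exact ⟨hne, h⟩
  have memNv : ∀ w : V, G.Adj v w → w ≠ u → w ∈ Nv := by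
    intro w h hne
    rw [hNv, Finset.mem_erase, SimpleGraph.mem_neighborFinset]
    exact ⟨hne, h⟩
  have hG'adj : ∀ a b : V, G.Adj a b → ¬(a = u ∧ b = v) → ¬(a = v ∧ b = u) →
      (G.deleteEdges {s(u, v)}).Adj a b := by
    intro a b h h1 h2
    rw [SimpleGraph.deleteEdges_adj]
    refine ⟨h, ?_⟩
    rw [Set.mem_singleton_iff, Sym2.eq_iff]
    tauto
  -- forbidden colors for the incidence (u, uv)
  set A : Finset (Fin (k + 4)) :=
    Nu.image (φ u) ∪ Nv.image (φ v) ∪ Nu.image (fun w => φ w u) with hA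
  have hAcard : A.card ≤ 9 := by
    calc A.card ≤ (Nu.image (φ u) ∪ Nv.image (φ v)).card
          + (Nu.image (fun w => φ w u)).card := Finset.card_union_le _ _
      _ ≤ ((Nu.image (φ u)).card + (Nv.image (φ v)).card)
          + (Nu.image (fun w => φ w u)).card := by
            exact Nat.add_le_add_right (Finset.card_union_le _ _) _
      _ ≤ 9 := by
          have h1 := (Finset.card_image_le (s := Nu) (f := φ u)).trans hNuc.le
          have h2 := (Finset.card_image_le (s := Nv) (f := φ v)).trans hNvc.le
          have h3 := (Finset.card_image_le (s := Nu) (f := fun w => φ w u)).trans hNuc.le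
          omega
  obtain ⟨ca, hca⟩ : ∃ c : Fin (k + 4), c ∉ A := by
    have : (Aᶜ : Finset (Fin (k + 4))).Nonempty := by
      rw [← Finset.card_pos, Finset.card_compl]
      have : Fintype.card (Fin (k + 4)) = k + 4 := Fintype.card_fin _
      omega
    obtain ⟨c, hc⟩ := this
    exact ⟨c, Finset.mem_compl.mp hc⟩
  -- forbidden colors for the incidence (v, vu)
  set B : Finset (Fin (k + 4)) :=
    (Nv.image (φ v) ∪ Nu.image (φ u) ∪ Nv.image (fun w => φ w v)) ∪ {ca} with hB
  have hBcard : B.card ≤ 10 := by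
    calc B.card ≤ (Nv.image (φ v) ∪ Nu.image (φ u) ∪ Nv.image (fun w => φ w v)).card
          + ({ca} : Finset (Fin (k + 4))).card := Finset.card_union_le _ _
      _ ≤ ((Nv.image (φ v) ∪ Nu.image (φ u)).card + (Nv.image (fun w => φ w v)).card) + 1 := by
            simp only [Finset.card_singleton]
            exact Nat.add_le_add_right (Finset.card_union_le _ _) _
      _ ≤ (((Nv.image (φ v)).card + (Nu.image (φ u)).card)
            + (Nv.image (fun w => φ w v)).card) + 1 := by
            exact Nat.add_le_add_right (Nat.add_le_add_right (Finset.card_union_le _ _) _) _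
      _ ≤ 10 := by
          have h1 := (Finset.card_image_le (s := Nv) (f := φ v)).trans hNvc.le
          have h2 := (Finset.card_image_le (s := Nu) (f := φ u)).trans hNuc.le
          have h3 := (Finset.card_image_le (s := Nv) (f := fun w => φ w v)).trans hNvc.le
          omega
  obtain ⟨cb, hcb⟩ : ∃ c : Fin (k + 4), c ∉ B := by
    have : (Bᶜ : Finset (Fin (k + 4))).Nonempty := by
      rw [← Finset.card_pos, Finset.card_compl]
      have : Fintype.card (Fin (k + 4)) = k + 4 := Fintype.card_fin _
      omega
    obtain ⟨c, hc⟩ := this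
    exact ⟨c, Finset.mem_compl.mp hc⟩
  have hcaB : ca ∈ B := by
    rw [hB]
    exact Finset.mem_union_right _ (Finset.mem_singleton_self ca)
  -- the new coloring
  set φ' : V → V → Fin (k + 4) := fun a b =>
    if a = u ∧ b = v then ca else if a = v ∧ b = u then cb else φ a b with hφ'
  have hφ'uv : φ' u v = ca := by simp [hφ']
  have hφ'vu : φ' v u = cb := by
    simp [hφ', hune.symm]
  have hφ'ne : ∀ a b : V, ¬(a = u ∧ b = v) → ¬(a = v ∧ b = u) → φ' a b = φ a b := by
    intro a b h1 h2
    simp only [hφ']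
    rw [if_neg h1, if_neg h2]
  -- key membership lemmas
  have key1 : ∀ w x : V, G.Adj w x → ¬(w = u ∧ x = v) → ¬(w = v ∧ x = u) →
      (u = w ∨ s(u, v) = s(w, x) ∨ s(u, w) = s(u, v) ∨ s(u, w) = s(w, x)) →
      φ w x ∈ A := by
    intro w x hwx h1 h2 hP
    rcases hP with h | h | h | h
    · subst h
      refine Finset.mem_union_left _ (Finset.mem_union_left _ ?_)
      exact Finset.mem_image_of_mem _ (memNu x hwx (fun hx => h1 ⟨rfl, hx⟩))
    · rw [Sym2.eq_iff] at h
      rcases h with ⟨h3, h4⟩ | ⟨h3, h4⟩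
      · exact absurd ⟨h3.symm, h4.symm⟩ h1
      · exact absurd ⟨h4.symm, h3.symm⟩ h2
    · rw [Sym2.eq_iff] at h
      have hw : w = v := by
        rcases h with ⟨h3, h4⟩ | ⟨h3, h4⟩
        · exact h4
        · exact absurd h3 hune
      subst hw
      refine Finset.mem_union_left _ (Finset.mem_union_right _ ?_)
      exact Finset.mem_image_of_mem _ (memNv x hwx (fun hx => h2 ⟨rfl, hx⟩))
    · rw [Sym2.eq_iff] at h
      have hx : x = u := by
        rcases h with ⟨h3, h4⟩ | ⟨h3, h4⟩
        · exact absurd h4 hwx.ne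
        · exact h3.symm
      subst hx
      refine Finset.mem_union_right _ ?_
      exact Finset.mem_image_of_mem _ (memNu w hwx.symm (fun hw => h2 ⟨hw, rfl⟩))
  have key2 : ∀ w x : V, G.Adj w x → ¬(w = u ∧ x = v) → ¬(w = v ∧ x = u) →
      (v = w ∨ s(v, u) = s(w, x) ∨ s(v, w) = s(v, u) ∨ s(v, w) = s(w, x)) →
      φ w x ∈ B := by
    intro w x hwx h1 h2 hP
    refine Finset.mem_union_left _ ?_
    rcases hP with h | h | h | h
    · subst h
      refine Finset.mem_union_left _ (Finset.mem_union_left _ ?_)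
      exact Finset.mem_image_of_mem _ (memNv x hwx (fun hx => h2 ⟨rfl, hx⟩))
    · rw [Sym2.eq_iff] at h
      rcases h with ⟨h3, h4⟩ | ⟨h3, h4⟩
      · exact absurd ⟨h3.symm, h4.symm⟩ h2
      · exact absurd ⟨h4.symm, h3.symm⟩ h1
    · rw [Sym2.eq_iff] at h
      have hw : w = u := by
        rcases h with ⟨h3, h4⟩ | ⟨h3, h4⟩
        · exact h4
        · exact absurd h3 hune.symm
      subst hw
      refine Finset.mem_union_left _ (Finset.mem_union_right _ ?_)
      exact Finset.mem_image_of_mem _ (memNu x hwx (fun hx => h1 ⟨rfl, hx⟩))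
    · rw [Sym2.eq_iff] at h
      have hx : x = v := by
        rcases h with ⟨h3, h4⟩ | ⟨h3, h4⟩
        · exact absurd h4 hwx.ne
        · exact h3.symm
      subst hx
      refine Finset.mem_union_right _ ?_
      exact Finset.mem_image_of_mem _ (memNv w hwx.symm (fun hw => h1 ⟨hw, rfl⟩))
  have hsym : ∀ p q w x : V,
      (p = w ∨ s(p, q) = s(w, x) ∨ s(p, w) = s(p, q) ∨ s(p, w) = s(w, x)) →
      (w = p ∨ s(w, x) = s(p, q) ∨ s(w, p) = s(w, x) ∨ s(w, p) = s(p, q)) := by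
    intro p q w x h
    rcases h with h | h | h | h
    · exact Or.inl h.symm
    · exact Or.inr (Or.inl h.symm)
    · exact Or.inr (Or.inr (Or.inr ((Sym2.eq_swap).trans h)))
    · exact Or.inr (Or.inr (Or.inl ((Sym2.eq_swap).trans h)))
  refine ⟨φ', ?_, ?_⟩
  · -- proves it is an incidence coloring
    intro p q w x hpq hwx hne hP
    by_cases h1 : p = u ∧ q = v
    · rw [h1.1, h1.2] at hP hne ⊢
      rw [hφ'uv]
      by_cases h2 : w = u ∧ x = v
      · exact absurd (by rw [h2.1, h2.2]) hne
      · by_cases h3 : w = v ∧ x = u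
        · rw [h3.1, h3.2, hφ'vu]
          intro h
          exact hcb (h ▸ hcaB)
        · rw [hφ'ne w x h2 h3]
          intro h
          exact hca (by rw [h]; exact key1 w x hwx h2 h3 hP)
    · by_cases h1' : p = v ∧ q = u
      · rw [h1'.1, h1'.2] at hP hne ⊢
        rw [hφ'vu]
        by_cases h2 : w = u ∧ x = v
        · rw [h2.1, h2.2, hφ'uv]
          intro h
          exact hcb (h.symm ▸ hcaB)
        · by_cases h3 : w = v ∧ x = u
          · exact absurd (by rw [h3.1, h3.2]) hne
          · rw [hφ'ne w x h2 h3]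
            intro h
            exact hcb (by rw [h]; exact key2 w x hwx h2 h3 hP)
      · rw [hφ'ne p q h1 h1']
        by_cases h2 : w = u ∧ x = v
        · rw [h2.1, h2.2] at hP ⊢
          rw [hφ'uv]
          intro h
          exact hca (by rw [← h]; exact key1 p q hpq h1 h1' (hsym p q u v hP))
        · by_cases h3 : w = v ∧ x = u
          · rw [h3.1, h3.2] at hP ⊢
            rw [hφ'vu]
            intro h
            exact hcb (by rw [← h]; exact key2 p q hpq h1 h1' (hsym p q v u hP))
          · rw [hφ'ne w x h2 h3]
            exact hφ (hG'adj p q hpq h1 h1') (hG'adj w x hwx h2 h3) hne hP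
  · -- the (·, 4) condition
    intro t
    by_cases htu : t = u
    · subst htu
      have hset : {c : Fin (k + 4) | ∃ w : V, G.Adj w t ∧ φ' w t = c}
          = ↑((G.neighborFinset t).image (fun w => φ' w t)) := by
        ext c
        simp only [Set.mem_setOf_eq, Finset.coe_image, Set.mem_image, Finset.mem_coe,
          SimpleGraph.mem_neighborFinset]
        constructor
        · rintro ⟨w, hw, rfl⟩; exact ⟨w, hw.symm, rfl⟩
        · rintro ⟨w, hw, rfl⟩; exact ⟨w, hw.symm, rfl⟩
      rw [hset, Set.ncard_coe_finset]
      calc ((G.neighborFinset t).image (fun w => φ' w t)).card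
          ≤ (G.neighborFinset t).card := Finset.card_image_le
        _ = 4 := by rw [SimpleGraph.card_neighborFinset_eq_degree, hdu]
    · by_cases htv : t = v
      · subst htv
        have hset : {c : Fin (k + 4) | ∃ w : V, G.Adj w t ∧ φ' w t = c}
            = ↑((G.neighborFinset t).image (fun w => φ' w t)) := by
          ext c
          simp only [Set.mem_setOf_eq, Finset.coe_image, Set.mem_image, Finset.mem_coe,
            SimpleGraph.mem_neighborFinset]
          constructor
          · rintro ⟨w, hw, rfl⟩; exact ⟨w, hw.symm, rfl⟩
          · rintro ⟨w, hw, rfl⟩; exact ⟨w, hw.symm, rfl⟩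
        rw [hset, Set.ncard_coe_finset]
        calc ((G.neighborFinset t).image (fun w => φ' w t)).card
            ≤ (G.neighborFinset t).card := Finset.card_image_le
          _ = 4 := by rw [SimpleGraph.card_neighborFinset_eq_degree, hdv]
      · have hset : {c : Fin (k + 4) | ∃ w : V, G.Adj w t ∧ φ' w t = c}
            = {c : Fin (k + 4) | ∃ w : V, (G.deleteEdges {s(u, v)}).Adj w t ∧ φ w t = c} := by
          ext c
          simp only [Set.mem_setOf_eq]
          constructor
          · rintro ⟨w, hw, rfl⟩
            refine ⟨w, hG'adj w t hw (fun h => htv h.2) (fun h => htu h.2), ?_⟩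
            exact (hφ'ne w t (fun h => htv h.2) (fun h => htu h.2)).symm
          · rintro ⟨w, hw, rfl⟩
            refine ⟨w, (SimpleGraph.deleteEdges_adj.mp hw).1, ?_⟩
            exact hφ'ne w t (fun h => htv h.2) (fun h => htu h.2)
        rw [hset]
        exact hℓ t
end

section
/- Let k ≥ 9 be an integer and let G be a finite simple graph with Δ(G) ≤ k. Suppose G contains a vertex v of degree 4 all of whose four neighbors have degree at most 5. If G − v admits an incidence (k+4, 4)-coloring, then G admits an incidence (k+4, 4)-coloring. -/
/-!
Keep the colouring of `G - v`; only the eight incidences on the edges `vw` need colours.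
For a neighbour `w`, let `A w` and `B w` be the colours entering and leaving `w` in `G - v`;
they are disjoint, `|A w| ≤ 4` and `|B w| ≤ deg w - 1 ≤ 4`. The incidence `(v, vw)` gets a
colour outside `B w` that lies in `A w` when `A w` already has four colours (so that `w` still
sees at most four incoming colours); every neighbour has at least four such colours, so Hall's
theorem makes these four choices distinct. The incidence `(w, wv)` then only has to avoid
`A w`, `B w` and the four colours at `v`, at most `12 < k + 4` colours.
-/

open SimpleGraph

open Finset

theorem exists_injOn_notMem_card_insert_le {ι α : Type*} [Fintype α] [DecidableEq α]
    [Nonempty α] {ℓ : ℕ} (s : Finset ι) (A B : ι → Finset α)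
    (hAB : ∀ i ∈ s, Disjoint (A i) (B i)) (hA : ∀ i ∈ s, #(A i) ≤ ℓ) (hs : #s ≤ ℓ)
    (hB : ∀ i ∈ s, #s + #(B i) ≤ Fintype.card α) :
    ∃ t : ι → α, Set.InjOn t s ∧ ∀ i ∈ s, t i ∉ B i ∧ #(insert (t i) (A i)) ≤ ℓ := by
  classical
  let r : s → α → Prop := fun i c => c ∉ B i ∧ #(insert c (A i)) ≤ ℓ
  have card_r : ∀ i : s, #s ≤ #{c | r i c} := by
    rintro ⟨i, hi⟩
    by_cases hAℓ : ℓ ≤ #(A i)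
    · refine hs.trans (hAℓ.trans (card_le_card fun c hc => ?_))
      simpa [r, insert_eq_of_mem hc, hA i hi] using disjoint_left.mp (hAB i hi) hc
    · calc #s ≤ #(B i)ᶜ := by rw [card_compl]; have := hB i hi; omega
        _ ≤ #{c | r ⟨i, hi⟩ c} := card_le_card fun c hc => by
            have := card_insert_le c (A i)
            simp only [mem_filter, mem_univ, true_and, r]
            exact ⟨mem_compl.mp hc, by omega⟩
  obtain ⟨t, ht, htr⟩ := (Fintype.all_card_le_filter_rel_iff_exists_injective r).mp fun S => by
    rcases S.eq_empty_or_nonempty with rfl | ⟨i, hi⟩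
    · simp
    calc #S ≤ #s := by simpa using card_le_univ S
      _ ≤ #{c | r i c} := card_r i
      _ ≤ #{c | ∃ a ∈ S, r a c} := card_le_card fun c hc => by
          simp only [mem_filter, mem_univ, true_and] at hc ⊢
          exact ⟨i, hi, hc⟩
  refine ⟨fun i => if h : i ∈ s then t ⟨i, h⟩ else Classical.arbitrary α,
    fun i hi j hj hij => ?_, fun i hi => ?_⟩
  · rw [mem_coe] at hi hj
    simp only [dif_pos hi, dif_pos hj] at hij
    exact congrArg Subtype.val (ht hij)
  · simpa [dif_pos hi] using htr ⟨i, hi⟩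

theorem exists_forall_notMem_of_card_lt {ι α : Type*} [Fintype α] [Nonempty α] (s : Finset ι)
    (F : ι → Finset α) (hF : ∀ i ∈ s, #(F i) < Fintype.card α) :
    ∃ b : ι → α, ∀ i ∈ s, b i ∉ F i := by
  classical
  have (i : ι) : ∃ c, i ∈ s → c ∉ F i := by
    by_cases hi : i ∈ s
    · obtain ⟨c, -, hc⟩ := exists_mem_notMem_of_card_lt_card (s := F i) (t := univ)
        (by rw [card_univ]; exact hF i hi)
      exact ⟨c, fun _ => hc⟩
    · exact ⟨Classical.arbitrary α, fun h => absurd h hi⟩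
  exact Classical.skolem.mp this

section

variable {V : Type*} {G : SimpleGraph V} {n ℓ : ℕ}

theorem isIncidenceColoring_iff {φ : V → V → Fin n} :
    IsIncidenceColoring G φ ↔
      (∀ ⦃a b d⦄, G.Adj a b → G.Adj a d → b ≠ d → φ a b ≠ φ a d) ∧
        ∀ ⦃a b d⦄, G.Adj a b → G.Adj b d → φ a b ≠ φ b d := by
  refine ⟨fun h => ⟨fun a b d hab had hbd => h hab had (by simpa using hbd) (Or.inl rfl),
    fun a b d hab hbd =>
      h hab hbd (fun h => hab.ne (Prod.mk.inj h).1) (Or.inr <| Or.inr <| Or.inl rfl)⟩,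
    fun ⟨hstar, hpath⟩ a b c d hab hcd hne hcond => ?_⟩
  have := hab.ne
  have := hcd.ne
  rcases (show a = c ∨ b = c ∨ a = d by simp only [Sym2.eq_iff] at hcond; grind)
    with rfl | rfl | rfl
  · exact hstar hab hcd fun hbd => hne (by rw [hbd])
  · exact hpath hab hcd
  · exact (hpath hcd hab).symm

theorem HasIncidenceColoring.of_induce [NeZero n] {s : Set V} (hs : G.support ⊆ s)
    (h : HasIncidenceColoring (G.induce s) n ℓ) : HasIncidenceColoring G n ℓ := by
  classical
  obtain ⟨φ, hφ, hℓ⟩ := h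
  have mem_left {a b : V} (hab : G.Adj a b) : a ∈ s := hs ⟨b, hab⟩
  have mem_right {a b : V} (hab : G.Adj a b) : b ∈ s := hs ⟨a, hab.symm⟩
  set ψ : V → V → Fin n := fun a b => if h : a ∈ s ∧ b ∈ s then φ ⟨a, h.1⟩ ⟨b, h.2⟩ else 0
  have hψ {a b : V} (hab : G.Adj a b) : ψ a b = φ ⟨a, mem_left hab⟩ ⟨b, mem_right hab⟩ :=
    dif_pos ⟨mem_left hab, mem_right hab⟩
  obtain ⟨hstar, hpath⟩ := isIncidenceColoring_iff.mp hφ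
  refine ⟨ψ, isIncidenceColoring_iff.mpr ⟨fun a b d hab had hbd => ?_, fun a b d hab hbd => ?_⟩,
    fun u => ?_⟩
  · rw [hψ hab, hψ had]
    exact hstar (by simpa using hab) (by simpa using had) (by simpa [Subtype.ext_iff] using hbd)
  · rw [hψ hab, hψ hbd]
    exact hpath (by simpa using hab) (by simpa using hbd)
  · by_cases hu : u ∈ s
    · refine (Set.ncard_le_ncard ?_ (Set.toFinite _)).trans (hℓ ⟨u, hu⟩)
      rintro c ⟨x, hx, rfl⟩
      exact ⟨⟨x, mem_left hx⟩, by simpa using hx, (hψ hx).symm⟩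
    · have : {c | ∃ x, G.Adj x u ∧ ψ x u = c} = ∅ :=
        Set.eq_empty_of_forall_notMem fun _ ⟨_, hx, _⟩ => hu (mem_right hx)
      simp [this]

section extendAt

variable [DecidableEq V]

-- `t w` colours the incidence `(v, vw)` and `b w` the incidence `(w, wv)`.
def extendAt (v : V) (φ : V → V → Fin n) (t b : V → Fin n) : V → V → Fin n :=
  fun x y => if x = v then t y else if y = v then b x else φ x y

variable {v : V} {φ : V → V → Fin n} {t b : V → Fin n}

@[simp]
theorem extendAt_self_left (y : V) : extendAt v φ t b v y = t y := if_pos rfl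

theorem extendAt_self_right {x : V} (hx : x ≠ v) : extendAt v φ t b x v = b x := by
  simp [extendAt, hx]

theorem extendAt_of_ne {x y : V} (hx : x ≠ v) (hy : y ≠ v) : extendAt v φ t b x y = φ x y := by
  simp [extendAt, hx, hy]

end extendAt

section Fintype

variable [Fintype V] [DecidableRel G.Adj]

variable (G) in
def inColors (φ : V → V → Fin n) (w : V) : Finset (Fin n) :=
  (G.neighborFinset w).image (φ · w)

variable (G) in
def outColors (φ : V → V → Fin n) (w : V) : Finset (Fin n) :=
  (G.neighborFinset w).image (φ w)

theorem mem_inColors {φ : V → V → Fin n} {w : V} {c : Fin n} :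
    c ∈ inColors G φ w ↔ ∃ u, G.Adj u w ∧ φ u w = c := by
  simp [inColors, adj_comm]

theorem mem_outColors {φ : V → V → Fin n} {w : V} {c : Fin n} :
    c ∈ outColors G φ w ↔ ∃ u, G.Adj w u ∧ φ w u = c := by
  simp [outColors]

theorem card_outColors_le (φ : V → V → Fin n) (w : V) : #(outColors G φ w) ≤ G.degree w :=
  card_image_le

theorem coe_inColors (φ : V → V → Fin n) (w : V) :
    (inColors G φ w : Set (Fin n)) = {c | ∃ u, G.Adj u w ∧ φ u w = c} := by
  ext; exact mem_inColors

theorem IsIncidenceColoring.disjoint_inColors_outColors {φ : V → V → Fin n}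
    (hφ : IsIncidenceColoring G φ) (w : V) : Disjoint (inColors G φ w) (outColors G φ w) := by
  rw [Finset.disjoint_left]
  rintro _ hin hout
  obtain ⟨u, hu, rfl⟩ := mem_inColors.mp hin
  obtain ⟨x, hx, hc⟩ := mem_outColors.mp hout
  exact (isIncidenceColoring_iff.mp hφ).2 hu hx hc.symm

variable [DecidableEq V]

theorem degree_deleteIncidenceSet_lt {v w : V} (h : G.Adj v w) :
    (G.deleteIncidenceSet v).degree w < G.degree w := by
  rw [← card_neighborFinset_eq_degree, ← card_neighborFinset_eq_degree]
  refine card_lt_card ((ssubset_iff_of_subset fun u hu => ?_).mpr ⟨v, ?_, ?_⟩)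
  · simp only [mem_neighborFinset, deleteIncidenceSet_adj] at hu ⊢
    exact hu.1
  · simpa using h.symm
  · simp [deleteIncidenceSet_adj]

section extendAt

variable {v : V} {φ : V → V → Fin n} {t b : V → Fin n}

theorem isIncidenceColoring_extendAt (hφ : IsIncidenceColoring (G.deleteIncidenceSet v) φ)
    (ht : Set.InjOn t (G.neighborSet v))
    (ht_out : ∀ w, G.Adj v w → t w ∉ outColors (G.deleteIncidenceSet v) φ w)
    (hb_in : ∀ w, G.Adj v w → b w ∉ inColors (G.deleteIncidenceSet v) φ w)
    (hb_out : ∀ w, G.Adj v w → b w ∉ outColors (G.deleteIncidenceSet v) φ w)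
    (hb_t : ∀ w w', G.Adj v w → G.Adj v w' → b w ≠ t w') :
    IsIncidenceColoring G (extendAt v φ t b) := by
  obtain ⟨hstar, hpath⟩ := isIncidenceColoring_iff.mp hφ
  have old {x y : V} (hxy : G.Adj x y) (hx : x ≠ v) (hy : y ≠ v) :
      (G.deleteIncidenceSet v).Adj x y :=
    deleteIncidenceSet_adj.mpr ⟨hxy, hx, hy⟩
  have b_ne_out {w u : V} (hvw : G.Adj v w) (hwu : G.Adj w u) (hu : u ≠ v) : b w ≠ φ w u :=
    fun h => hb_out w hvw (mem_outColors.mpr ⟨u, old hwu hvw.ne' hu, h.symm⟩)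
  refine isIncidenceColoring_iff.mpr ⟨fun x y z hxy hxz hyz => ?_, fun x y z hxy hyz => ?_⟩
  · rcases eq_or_ne x v with hx | hx
    · subst x
      rw [extendAt_self_left, extendAt_self_left]
      exact ht.ne hxy hxz hyz
    rcases eq_or_ne y v with hy | hy
    · subst y
      rw [extendAt_self_right hx, extendAt_of_ne hx hyz.symm]
      exact b_ne_out hxy.symm hxz hyz.symm
    rcases eq_or_ne z v with hz | hz
    · subst z
      rw [extendAt_of_ne hx hy, extendAt_self_right hx]
      exact (b_ne_out hxz.symm hxy hy).symm
    rw [extendAt_of_ne hx hy, extendAt_of_ne hx hz]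
    exact hstar (old hxy hx hy) (old hxz hx hz) hyz
  · rcases eq_or_ne x v with hx | hx
    · subst x
      rw [extendAt_self_left]
      rcases eq_or_ne z v with hz | hz
      · subst z
        rw [extendAt_self_right hxy.ne']
        exact (hb_t y y hxy hxy).symm
      rw [extendAt_of_ne hxy.ne' hz]
      exact fun h => ht_out y hxy (mem_outColors.mpr ⟨z, old hyz hxy.ne' hz, h.symm⟩)
    rcases eq_or_ne y v with hy | hy
    · subst y
      rw [extendAt_self_right hx, extendAt_self_left]
      exact hb_t x z hxy.symm hyz
    rcases eq_or_ne z v with hz | hz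
    · subst z
      rw [extendAt_of_ne hx hy, extendAt_self_right hy]
      exact fun h => hb_in y hyz.symm (mem_inColors.mpr ⟨x, old hxy hx hy, h⟩)
    rw [extendAt_of_ne hx hy, extendAt_of_ne hy hz]
    exact hpath (old hxy hx hy) (old hyz hy hz)

theorem card_inColors_extendAt_le (hφ : ∀ w, #(inColors (G.deleteIncidenceSet v) φ w) ≤ ℓ)
    (hv : G.degree v ≤ ℓ)
    (ht : ∀ w, G.Adj v w → #(insert (t w) (inColors (G.deleteIncidenceSet v) φ w)) ≤ ℓ)
    (u : V) : #(inColors G (extendAt v φ t b) u) ≤ ℓ := by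
  by_cases huv : u = v
  · subst u
    refine (card_le_card (t := (G.neighborFinset v).image b) fun c hc => ?_).trans
      (card_image_le.trans hv)
    obtain ⟨x, hx, rfl⟩ := mem_inColors.mp hc
    rw [extendAt_self_right hx.ne]
    exact mem_image_of_mem b ((mem_neighborFinset G v x).mpr hx.symm)
  have old {x : V} (hx : G.Adj x u) (hxv : x ≠ v) :
      extendAt v φ t b x u ∈ inColors (G.deleteIncidenceSet v) φ u := by
    rw [extendAt_of_ne hxv huv]
    exact mem_inColors.mpr ⟨x, deleteIncidenceSet_adj.mpr ⟨hx, hxv, huv⟩, rfl⟩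
  by_cases hvu : G.Adj v u
  · refine (card_le_card fun c hc => ?_).trans (ht u hvu)
    obtain ⟨x, hx, rfl⟩ := mem_inColors.mp hc
    rcases eq_or_ne x v with hxv | hxv
    · subst x
      simp
    · exact mem_insert_of_mem (old hx hxv)
  · refine (card_le_card fun c hc => ?_).trans (hφ u)
    obtain ⟨x, hx, rfl⟩ := mem_inColors.mp hc
    exact old hx (by rintro rfl; exact hvu hx)

end extendAt

theorem HasIncidenceColoring.of_deleteIncidenceSet {v : V}
    (h : HasIncidenceColoring (G.deleteIncidenceSet v) n ℓ) (hv : G.degree v ≤ ℓ)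
    (hnb : ∀ w, G.Adj v w → ℓ + G.degree w + G.degree v ≤ n) : HasIncidenceColoring G n ℓ := by
  obtain ⟨φ, hφ, hℓ⟩ := h
  have : NeZero n := NeZero.of_pos (φ v v).pos
  set H := G.deleteIncidenceSet v
  set N := G.neighborFinset v
  have hA (w : V) : #(inColors H φ w) ≤ ℓ := by
    rw [← Set.ncard_coe_finset, coe_inColors]
    exact hℓ w
  have hB {w : V} (hw : G.Adj v w) : #(outColors H φ w) < G.degree w :=
    (card_outColors_le φ w).trans_lt (degree_deleteIncidenceSet_lt hw)
  have hN {w : V} (hw : G.Adj v w) : w ∈ N := (mem_neighborFinset G v w).mpr hw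
  have hcardN : #N = G.degree v := card_neighborFinset_eq_degree G v
  obtain ⟨t, ht_inj, ht⟩ := exists_injOn_notMem_card_insert_le N (inColors H φ)
    (outColors H φ) (fun w _ => hφ.disjoint_inColors_outColors w) (fun w _ => hA w)
    (hcardN ▸ hv) fun w hw => by
      rw [mem_neighborFinset] at hw
      have := hB hw
      have := hnb w hw
      simp only [Fintype.card_fin]
      omega
  obtain ⟨b, hb⟩ := exists_forall_notMem_of_card_lt N
    (fun w => inColors H φ w ∪ outColors H φ w ∪ N.image t) fun w hw => by
      rw [mem_neighborFinset] at hw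
      have := hnb w hw
      have := hB hw
      have := hA w
      have := card_image_le (s := N) (f := t)
      calc #(inColors H φ w ∪ outColors H φ w ∪ N.image t)
          ≤ #(inColors H φ w) + #(outColors H φ w) + #(N.image t) :=
            (card_union_le _ _).trans (by gcongr; exact card_union_le _ _)
        _ < Fintype.card (Fin n) := by rw [Fintype.card_fin]; omega
  refine ⟨extendAt v φ t b, isIncidenceColoring_extendAt hφ (coe_neighborFinset G v ▸ ht_inj)
    (fun w hw => (ht w (hN hw)).1)
    (fun w hw h => hb w (hN hw) (mem_union_left _ (mem_union_left _ h)))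
    (fun w hw h => hb w (hN hw) (mem_union_left _ (mem_union_right _ h)))
    (fun w w' hw hw' h => hb w (hN hw) (mem_union_right _ (h ▸ mem_image_of_mem t (hN hw')))),
    fun u => ?_⟩
  rw [← coe_inColors, Set.ncard_coe_finset]
  exact card_inColors_extendAt_le hA hv (fun w hw => (ht w (hN hw)).2) u

end Fintype

end

theorem incidence_extend_four_vertex_all_small_general {V : Type*} [Fintype V] (G : SimpleGraph V)
    [DecidableRel G.Adj] (k : ℕ) (hk : 9 ≤ k)
    (v : V) (hdv : G.degree v = 4)
    (hnb : ∀ w : V, G.Adj v w → G.degree w ≤ 5)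
    (hcol : HasIncidenceColoring (G.induce ({v}ᶜ : Set V)) (k + 4) 4) :
    HasIncidenceColoring G (k + 4) 4 := by
  classical
  have hsupp : (G.deleteIncidenceSet v).support ⊆ {v}ᶜ :=
    fun u hu => (support_deleteIncidenceSet_subset G v hu).2
  refine .of_deleteIncidenceSet (.of_induce hsupp ?_) hdv.le fun w hw => ?_
  · rwa [G.induce_deleteIncidenceSet_of_notMem (by simp : v ∉ ({v}ᶜ : Set V))]
  · have := hnb w hw
    omega

theorem incidence_extend_four_vertex_all_small {V : Type*} [Fintype V] (G : SimpleGraph V)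
    [DecidableRel G.Adj] (k : ℕ) (hk : 9 ≤ k) (hΔ : G.maxDegree ≤ k)
    (v : V) (hdv : G.degree v = 4)
    (hnb : ∀ w : V, G.Adj v w → G.degree w ≤ 5)
    (hcol : HasIncidenceColoring (G.induce ({v}ᶜ : Set V)) (k + 4) 4) :
    HasIncidenceColoring G (k + 4) 4 :=
  incidence_extend_four_vertex_all_small_general G k hk v hdv hnb hcol
end

section
/- Let k ≥ 9 be an integer and let G be a finite simple graph with Δ(G) ≤ k. Suppose G contains adjacent vertices u and v with deg(v) = 4 and deg(u) ≤ 5. If G − uv admits an incidence (k+5, 5)-coloring, then G admits an incidence (k+5, 5)-coloring. -/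
open SimpleGraph

theorem incidence_extend_four_five_edge {V : Type*} [Fintype V] (G : SimpleGraph V)
    [DecidableRel G.Adj] (k : ℕ) (hk : 9 ≤ k) (hΔ : G.maxDegree ≤ k)
    (u v : V) (huv : G.Adj u v) (hdv : G.degree v = 4) (hdu : G.degree u ≤ 5)
    (hcol : HasIncidenceColoring (G.deleteEdges {s(u, v)}) (k + 5) 5) :
    HasIncidenceColoring G (k + 5) 5 := by
  classical
  obtain ⟨φ, hφ, hℓ⟩ := hcol
  set G' := G.deleteEdges {s(u, v)} with hG'
  have hne_uv : u ≠ v := huv.ne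
  have hG'adj : ∀ a b : V, G'.Adj a b ↔ G.Adj a b ∧ (a, b) ≠ (u, v) ∧ (a, b) ≠ (v, u) := by
    intro a b
    rw [hG', SimpleGraph.deleteEdges_adj, Set.mem_singleton_iff]
    constructor
    · rintro ⟨h, hs⟩
      refine ⟨h, fun he => hs ?_, fun he => hs ?_⟩
      · rw [Prod.ext_iff] at he
        rw [show a = u from he.1, show b = v from he.2]
      · rw [Prod.ext_iff] at he
        rw [show a = v from he.1, show b = u from he.2]
        exact Sym2.eq_swap
    · rintro ⟨h, h1, h2⟩
      refine ⟨h, fun hs => ?_⟩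
      rw [Sym2.eq_iff] at hs
      rcases hs with ⟨ha, hb⟩ | ⟨ha, hb⟩
      · exact h1 (by rw [ha, hb])
      · exact h2 (by rw [ha, hb])
  -- neighbor finset bounds
  have hsub_u : G'.neighborFinset u ⊆ (G.neighborFinset u).erase v := by
    intro x hx
    rw [SimpleGraph.mem_neighborFinset, hG'adj] at hx
    rw [Finset.mem_erase, SimpleGraph.mem_neighborFinset]
    refine ⟨fun h => hx.2.1 (by rw [h]), hx.1⟩
  have hsub_v : G'.neighborFinset v ⊆ (G.neighborFinset v).erase u := by
    intro x hx
    rw [SimpleGraph.mem_neighborFinset, hG'adj] at hx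
    rw [Finset.mem_erase, SimpleGraph.mem_neighborFinset]
    refine ⟨fun h => hx.2.2 (by rw [h]), hx.1⟩
  have hcard_u : (G'.neighborFinset u).card ≤ 4 := by
    calc (G'.neighborFinset u).card ≤ ((G.neighborFinset u).erase v).card :=
          Finset.card_le_card hsub_u
      _ = (G.neighborFinset u).card - 1 :=
          Finset.card_erase_of_mem (by rwa [SimpleGraph.mem_neighborFinset])
      _ ≤ 4 := by
          rw [← SimpleGraph.card_neighborFinset_eq_degree] at hdu; omega
  have hcard_v : (G'.neighborFinset v).card ≤ 3 := by
    calc (G'.neighborFinset v).card ≤ ((G.neighborFinset v).erase u).card :=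
          Finset.card_le_card hsub_v
      _ = (G.neighborFinset v).card - 1 :=
          Finset.card_erase_of_mem
            (by rw [SimpleGraph.mem_neighborFinset]; exact huv.symm)
      _ ≤ 3 := by
          rw [← SimpleGraph.card_neighborFinset_eq_degree] at hdv; omega
  -- choose c1
  set S1 : Finset (Fin (k + 5)) :=
    (G'.neighborFinset u).image (φ u) ∪ (G'.neighborFinset u).image (fun x => φ x u) ∪
      (G'.neighborFinset v).image (φ v) with hS1
  have hS1card : S1.card ≤ 11 := by
    calc S1.card ≤ (G'.neighborFinset u).card + (G'.neighborFinset u).card +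
        (G'.neighborFinset v).card := by
          refine le_trans (Finset.card_union_le _ _) ?_
          refine add_le_add (le_trans (Finset.card_union_le _ _) (add_le_add ?_ ?_)) ?_ <;>
            exact Finset.card_image_le
      _ ≤ 11 := by omega
  obtain ⟨c1, hc1⟩ : ∃ c, c ∉ S1 := by
    by_contra h
    push_neg at h
    have : (Finset.univ : Finset (Fin (k + 5))).card ≤ S1.card :=
      Finset.card_le_card (fun c _ => h c)
    simp only [Finset.card_univ, Fintype.card_fin] at this
    omega
  have h1x : ∀ x, G'.Adj u x → c1 ≠ φ u x := by
    intro x hx h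
    refine hc1 (Finset.mem_union_left _ (Finset.mem_union_left _ ?_))
    rw [Finset.mem_image]
    exact ⟨x, by rwa [SimpleGraph.mem_neighborFinset], h.symm⟩
  have h1xu : ∀ x, G'.Adj x u → c1 ≠ φ x u := by
    intro x hx h
    refine hc1 (Finset.mem_union_left _ (Finset.mem_union_right _ ?_))
    rw [Finset.mem_image]
    exact ⟨x, by rw [SimpleGraph.mem_neighborFinset]; exact hx.symm, h.symm⟩
  have h1vy : ∀ y, G'.Adj v y → c1 ≠ φ v y := by
    intro y hy h
    refine hc1 (Finset.mem_union_right _ ?_)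
    rw [Finset.mem_image]
    exact ⟨y, by rwa [SimpleGraph.mem_neighborFinset], h.symm⟩
  -- choose c2
  set S2 : Finset (Fin (k + 5)) :=
    (G'.neighborFinset v).image (φ v) ∪ (G'.neighborFinset v).image (fun y => φ y v) ∪
      (G'.neighborFinset u).image (φ u) ∪ {c1} with hS2
  have hS2card : S2.card ≤ 11 := by
    calc S2.card ≤ (G'.neighborFinset v).card + (G'.neighborFinset v).card +
        (G'.neighborFinset u).card + 1 := by
          refine le_trans (Finset.card_union_le _ _) (add_le_add ?_ (le_refl 1))
          refine le_trans (Finset.card_union_le _ _) (add_le_add ?_ ?_)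
          · refine le_trans (Finset.card_union_le _ _) (add_le_add ?_ ?_) <;>
              exact Finset.card_image_le
          · exact Finset.card_image_le
      _ ≤ 11 := by omega
  obtain ⟨c2, hc2⟩ : ∃ c, c ∉ S2 := by
    by_contra h
    push_neg at h
    have : (Finset.univ : Finset (Fin (k + 5))).card ≤ S2.card :=
      Finset.card_le_card (fun c _ => h c)
    simp only [Finset.card_univ, Fintype.card_fin] at this
    omega
  have h2vy : ∀ y, G'.Adj v y → c2 ≠ φ v y := by
    intro y hy h
    refine hc2 (Finset.mem_union_left _ (Finset.mem_union_left _ (Finset.mem_union_left _ ?_)))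
    rw [Finset.mem_image]
    exact ⟨y, by rwa [SimpleGraph.mem_neighborFinset], h.symm⟩
  have h2yv : ∀ y, G'.Adj y v → c2 ≠ φ y v := by
    intro y hy h
    refine hc2 (Finset.mem_union_left _ (Finset.mem_union_left _ (Finset.mem_union_right _ ?_)))
    rw [Finset.mem_image]
    exact ⟨y, by rw [SimpleGraph.mem_neighborFinset]; exact hy.symm, h.symm⟩
  have h2ux : ∀ x, G'.Adj u x → c2 ≠ φ u x := by
    intro x hx h
    refine hc2 (Finset.mem_union_left _ (Finset.mem_union_right _ ?_))
    rw [Finset.mem_image]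
    exact ⟨x, by rwa [SimpleGraph.mem_neighborFinset], h.symm⟩
  have hc2c1 : c2 ≠ c1 := fun h =>
    hc2 (Finset.mem_union_right _ (Finset.mem_singleton.2 h))
  -- the new coloring
  set ψ : V → V → Fin (k + 5) := fun a b =>
    if (a, b) = (u, v) then c1 else if (a, b) = (v, u) then c2 else φ a b with hψ
  have hψuv : ψ u v = c1 := by simp [hψ]
  have hψvu : ψ v u = c2 := by simp [hψ, hne_uv.symm]
  have hψold : ∀ a b : V, (a, b) ≠ (u, v) → (a, b) ≠ (v, u) → ψ a b = φ a b := by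
    intro a b h1 h2
    simp only [hψ]
    rw [if_neg h1, if_neg h2]
  -- key lemmas about forbidden trichotomies
  have key1 : ∀ r s : V, G.Adj r s → (r, s) ≠ (u, v) → (r, s) ≠ (v, u) →
      (u = r ∨ r = v ∨ s = u) → c1 ≠ φ r s := by
    intro r s hrs hn1 hn2 h
    have hG's : G'.Adj r s := (hG'adj r s).2 ⟨hrs, hn1, hn2⟩
    rcases h with h | h | h
    · rw [← h] at hG's ⊢; exact h1x s hG's
    · rw [h] at hG's ⊢; exact h1vy s hG's
    · rw [h] at hG's ⊢; exact h1xu r hG's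
  have key2 : ∀ r s : V, G.Adj r s → (r, s) ≠ (u, v) → (r, s) ≠ (v, u) →
      (r = v ∨ r = u ∨ s = v) → c2 ≠ φ r s := by
    intro r s hrs hn1 hn2 h
    rcases h with h | h | h
    · rw [h] at hrs hn1 hn2 ⊢; exact h2vy s ((hG'adj v s).2 ⟨hrs, hn1, hn2⟩)
    · rw [h] at hrs hn1 hn2 ⊢; exact h2ux s ((hG'adj u s).2 ⟨hrs, hn1, hn2⟩)
    · rw [h] at hrs hn1 hn2 ⊢; exact h2yv r ((hG'adj r v).2 ⟨hrs, hn1, hn2⟩)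
  refine ⟨ψ, ?_, ?_⟩
  · intro p q r s hP hQ hne hadj
    by_cases hP1 : (p, q) = (u, v)
    · have hP1' := hP1.symm
      rw [Prod.mk.injEq] at hP1'
      obtain ⟨rfl, rfl⟩ := hP1'
      by_cases hQ1 : (r, s) = (u, v)
      · exact absurd hQ1.symm hne
      by_cases hQ2 : (r, s) = (v, u)
      · have hQ2' := hQ2.symm
        rw [Prod.mk.injEq] at hQ2'
        obtain ⟨rfl, rfl⟩ := hQ2'
        rw [hψuv, hψvu]; exact hc2c1.symm
      · rw [hψuv, hψold r s hQ1 hQ2]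
        refine key1 r s hQ hQ1 hQ2 ?_
        rcases hadj with h | h | h | h
        · exact Or.inl h
        · exfalso
          rw [Sym2.eq_iff] at h
          rcases h with ⟨ha, hb⟩ | ⟨ha, hb⟩
          · exact hQ1 (by rw [ha, hb])
          · exact hQ2 (by rw [ha, hb])
        · rw [Sym2.eq_iff] at h
          rcases h with ⟨-, hb⟩ | ⟨hb, -⟩
          · exact Or.inr (Or.inl hb)
          · exact absurd hb hne_uv
        · rw [Sym2.eq_iff] at h
          rcases h with ⟨ha, hb⟩ | ⟨ha, -⟩
          · exact absurd hb hQ.ne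
          · exact Or.inr (Or.inr ha.symm)
    by_cases hP2 : (p, q) = (v, u)
    · have hP2' := hP2.symm
      rw [Prod.mk.injEq] at hP2'
      obtain ⟨rfl, rfl⟩ := hP2'
      by_cases hQ1 : (r, s) = (u, v)
      · have hQ1' := hQ1.symm
        rw [Prod.mk.injEq] at hQ1'
        obtain ⟨rfl, rfl⟩ := hQ1'
        rw [hψvu, hψuv]; exact hc2c1
      by_cases hQ2 : (r, s) = (v, u)
      · exact absurd hQ2.symm hne
      · rw [hψvu, hψold r s hQ1 hQ2]
        refine key2 r s hQ hQ1 hQ2 ?_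
        rcases hadj with h | h | h | h
        · exact Or.inl h.symm
        · exfalso
          rw [Sym2.eq_iff] at h
          rcases h with ⟨ha, hb⟩ | ⟨ha, hb⟩
          · exact hQ2 (by rw [ha, hb])
          · exact hQ1 (by rw [ha, hb])
        · rw [Sym2.eq_iff] at h
          rcases h with ⟨-, hb⟩ | ⟨hb, -⟩
          · exact Or.inr (Or.inl hb)
          · exact absurd hb.symm hne_uv
        · rw [Sym2.eq_iff] at h
          rcases h with ⟨ha, hb⟩ | ⟨ha, -⟩
          · exact absurd hb hQ.ne
          · exact Or.inr (Or.inr ha.symm)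
    -- (p,q) is old
    rw [hψold p q hP1 hP2]
    by_cases hQ1 : (r, s) = (u, v)
    · have hQ1' := hQ1.symm
      rw [Prod.mk.injEq] at hQ1'
      obtain ⟨rfl, rfl⟩ := hQ1'
      rw [hψuv]
      refine (key1 p q hP hP1 hP2 ?_).symm
      rcases hadj with h | h | h | h
      · exact Or.inl h.symm
      · exfalso
        rw [Sym2.eq_iff] at h
        rcases h with ⟨ha, hb⟩ | ⟨ha, hb⟩
        · exact hP1 (by rw [ha, hb])
        · exact hP2 (by rw [ha, hb])
      · rw [Sym2.eq_iff] at h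
        rcases h with ⟨-, hb⟩ | ⟨ha, hb⟩
        · exact Or.inr (Or.inr hb.symm)
        · exact absurd ha hP.ne
      · rw [Sym2.eq_iff] at h
        rcases h with ⟨ha, hb⟩ | ⟨ha, -⟩
        · exact absurd hb hne_uv
        · exact Or.inr (Or.inl ha)
    by_cases hQ2 : (r, s) = (v, u)
    · have hQ2' := hQ2.symm
      rw [Prod.mk.injEq] at hQ2'
      obtain ⟨rfl, rfl⟩ := hQ2'
      rw [hψvu]
      refine (key2 p q hP hP1 hP2 ?_).symm
      rcases hadj with h | h | h | h
      · exact Or.inl h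
      · exfalso
        rw [Sym2.eq_iff] at h
        rcases h with ⟨ha, hb⟩ | ⟨ha, hb⟩
        · exact hP2 (by rw [ha, hb])
        · exact hP1 (by rw [ha, hb])
      · rw [Sym2.eq_iff] at h
        rcases h with ⟨-, hb⟩ | ⟨ha, hb⟩
        · exact Or.inr (Or.inr hb.symm)
        · exact absurd ha hP.ne
      · rw [Sym2.eq_iff] at h
        rcases h with ⟨ha, hb⟩ | ⟨ha, -⟩
        · exact absurd hb.symm hne_uv
        · exact Or.inr (Or.inl ha)
    · rw [hψold r s hQ1 hQ2]
      exact hφ ((hG'adj p q).2 ⟨hP, hP1, hP2⟩) ((hG'adj r s).2 ⟨hQ, hQ1, hQ2⟩) hne hadj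
  · -- the ℓ = 5 condition
    intro w
    by_cases hwv : w = v
    · subst hwv
      have hsub : {c : Fin (k + 5) | ∃ x, G.Adj x w ∧ ψ x w = c} ⊆
          ↑((G'.neighborFinset w).image (fun x => φ x w) ∪ {c1}) := by
        rintro c ⟨x, hx, rfl⟩
        by_cases hxu : x = u
        · subst hxu
          rw [hψuv]
          exact Finset.mem_coe.2 (Finset.mem_union_right _ (Finset.mem_singleton_self _))
        · have hn1 : (x, w) ≠ (u, w) := fun h => hxu (by rw [Prod.mk.injEq] at h; exact h.1)
          have hn2 : (x, w) ≠ (w, u) := fun h => hne_uv.symm (by rw [Prod.mk.injEq] at h; exact h.2)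
          rw [hψold x w hn1 hn2]
          refine Finset.mem_coe.2 (Finset.mem_union_left _ ?_)
          rw [Finset.mem_image]
          refine ⟨x, ?_, rfl⟩
          rw [SimpleGraph.mem_neighborFinset]
          exact ((hG'adj x w).2 ⟨hx, hn1, hn2⟩).symm
      calc ({c : Fin (k + 5) | ∃ x, G.Adj x w ∧ ψ x w = c}).ncard
          ≤ ((G'.neighborFinset w).image (fun x => φ x w) ∪ {c1} : Finset (Fin (k + 5))).card := by
            rw [← Set.ncard_coe_finset]
            exact Set.ncard_le_ncard hsub (Finset.finite_toSet _)
        _ ≤ 5 := by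
            refine le_trans (Finset.card_union_le _ _) ?_
            have h0 := Finset.card_image_le (s := G'.neighborFinset w) (f := fun x => φ x w)
            have h1 := Finset.card_singleton c1
            omega
    by_cases hwu : w = u
    · subst hwu
      have hsub : {c : Fin (k + 5) | ∃ x, G.Adj x w ∧ ψ x w = c} ⊆
          ↑((G'.neighborFinset w).image (fun x => φ x w) ∪ {c2}) := by
        rintro c ⟨x, hx, rfl⟩
        by_cases hxv : x = v
        · subst hxv
          rw [hψvu]
          exact Finset.mem_coe.2 (Finset.mem_union_right _ (Finset.mem_singleton_self _))
        · have hn1 : (x, w) ≠ (w, v) := fun h => hne_uv (by rw [Prod.mk.injEq] at h; exact h.2)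
          have hn2 : (x, w) ≠ (v, w) := fun h => hxv (by rw [Prod.mk.injEq] at h; exact h.1)
          rw [hψold x w hn1 hn2]
          refine Finset.mem_coe.2 (Finset.mem_union_left _ ?_)
          rw [Finset.mem_image]
          refine ⟨x, ?_, rfl⟩
          rw [SimpleGraph.mem_neighborFinset]
          exact ((hG'adj x w).2 ⟨hx, hn1, hn2⟩).symm
      calc ({c : Fin (k + 5) | ∃ x, G.Adj x w ∧ ψ x w = c}).ncard
          ≤ ((G'.neighborFinset w).image (fun x => φ x w) ∪ {c2} : Finset (Fin (k + 5))).card := by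
            rw [← Set.ncard_coe_finset]
            exact Set.ncard_le_ncard hsub (Finset.finite_toSet _)
        _ ≤ 5 := by
            refine le_trans (Finset.card_union_le _ _) ?_
            have h0 := Finset.card_image_le (s := G'.neighborFinset w) (f := fun x => φ x w)
            have h1 := Finset.card_singleton c2
            omega
    · have heq : {c : Fin (k + 5) | ∃ x, G.Adj x w ∧ ψ x w = c} =
          {c : Fin (k + 5) | ∃ x, G'.Adj x w ∧ φ x w = c} := by
        ext c
        simp only [Set.mem_setOf_eq]
        constructor
        · rintro ⟨x, hx, rfl⟩
          have hn1 : (x, w) ≠ (u, v) := fun h => hwv (by rw [Prod.mk.injEq] at h; exact h.2)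
          have hn2 : (x, w) ≠ (v, u) := fun h => hwu (by rw [Prod.mk.injEq] at h; exact h.2)
          exact ⟨x, (hG'adj x w).2 ⟨hx, hn1, hn2⟩, (hψold x w hn1 hn2).symm⟩
        · rintro ⟨x, hx, rfl⟩
          rw [hG'adj] at hx
          exact ⟨x, hx.1, hψold x w hx.2.1 hx.2.2⟩
      rw [heq]
      exact hℓ w
end

section
/- Let k ≥ 9 be an integer and let G be a finite simple graph with Δ(G) ≤ k. Suppose G contains a vertex v of degree 4 having at least two neighbors of degree at most 6. If G − v admits an incidence (k+5, 5)-coloring, then G admits an incidence (k+5, 5)-coloring. -/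
open SimpleGraph

lemma pick_avoid {N : ℕ} (S : Finset (Fin N)) (h : S.card < N) : ∃ a, a ∉ S := by
  by_contra h'
  push_neg at h'
  have hsub : (Finset.univ : Finset (Fin N)) ⊆ S := fun x _ => h' x
  have := Finset.card_le_card hsub
  simp at this
  omega

lemma pick_a {N : ℕ} (A T E : Finset (Fin N)) (hdisj : Disjoint A T)
    (hT : T.card ≤ 5) (hTE : T.card = 5 → (T \ E).Nonempty)
    (hAE : A.card + E.card < N) :
    ∃ a, a ∉ A ∧ (insert a T).card ≤ 5 ∧ a ∉ E := by
  by_cases h5 : T.card = 5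
  · obtain ⟨a, ha⟩ := hTE h5
    rw [Finset.mem_sdiff] at ha
    refine ⟨a, fun hA => (Finset.disjoint_left.mp hdisj hA ha.1), ?_, ha.2⟩
    rw [Finset.insert_eq_self.mpr ha.1]; omega
  · obtain ⟨a, ha⟩ := pick_avoid (A ∪ E) (lt_of_le_of_lt (Finset.card_union_le _ _) hAE)
    rw [Finset.mem_union] at ha
    push_neg at ha
    exact ⟨a, ha.1, le_trans (Finset.card_insert_le _ _) (by omega), ha.2⟩

lemma selection {N : ℕ} (hN : 14 ≤ N) (A₁ A₂ A₃ A₄ T₁ T₂ T₃ T₄ : Finset (Fin N))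
    (hA1 : A₁.card ≤ 5) (hA2 : A₂.card ≤ 5)
    (hA3 : A₃.card + 6 ≤ N) (hA4 : A₄.card + 6 ≤ N)
    (hT1 : T₁.card ≤ 5) (hT2 : T₂.card ≤ 5) (hT3 : T₃.card ≤ 5) (hT4 : T₄.card ≤ 5)
    (hd1 : Disjoint A₁ T₁) (hd2 : Disjoint A₂ T₂)
    (hd3 : Disjoint A₃ T₃) (hd4 : Disjoint A₄ T₄) :
    ∃ a₁ a₂ a₃ a₄ b₁ b₂ b₃ b₄ : Fin N,
      (a₁ ≠ a₂ ∧ a₁ ≠ a₃ ∧ a₁ ≠ a₄ ∧ a₂ ≠ a₃ ∧ a₂ ≠ a₄ ∧ a₃ ≠ a₄) ∧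
      (a₁ ∉ A₁ ∧ (insert a₁ T₁).card ≤ 5) ∧
      (a₂ ∉ A₂ ∧ (insert a₂ T₂).card ≤ 5) ∧
      (a₃ ∉ A₃ ∧ (insert a₃ T₃).card ≤ 5) ∧
      (a₄ ∉ A₄ ∧ (insert a₄ T₄).card ≤ 5) ∧
      (b₁ ∉ A₁ ∧ b₁ ∉ T₁ ∧ b₁ ≠ a₁ ∧ b₁ ≠ a₂ ∧ b₁ ≠ a₃ ∧ b₁ ≠ a₄) ∧
      (b₂ ∉ A₂ ∧ b₂ ∉ T₂ ∧ b₂ ≠ a₁ ∧ b₂ ≠ a₂ ∧ b₂ ≠ a₃ ∧ b₂ ≠ a₄) ∧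
      (b₃ ∉ A₃ ∧ b₃ ∉ T₃ ∧ b₃ ≠ a₁ ∧ b₃ ≠ a₂ ∧ b₃ ≠ a₃ ∧ b₃ ≠ a₄) ∧
      (b₄ ∉ A₄ ∧ b₄ ∉ T₄ ∧ b₄ ≠ a₁ ∧ b₄ ≠ a₂ ∧ b₄ ≠ a₃ ∧ b₄ ≠ a₄) := by
  obtain ⟨g₃, hg₃⟩ := pick_avoid (A₃ ∪ T₃)
    (lt_of_le_of_lt (Finset.card_union_le _ _) (by omega))
  obtain ⟨g₄, hg₄⟩ := pick_avoid (A₄ ∪ T₄)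
    (lt_of_le_of_lt (Finset.card_union_le _ _) (by omega))
  rw [Finset.mem_union] at hg₃ hg₄
  push_neg at hg₃ hg₄
  -- a₁
  obtain ⟨a₁, ha₁A, ha₁T, ha₁E⟩ := pick_a A₁ T₁ {g₃, g₄} hd1 hT1
    (fun h5 => by
      rw [Finset.sdiff_nonempty]
      intro hsub
      have := Finset.card_le_card hsub
      have : ({g₃, g₄} : Finset (Fin N)).card ≤ 2 := Finset.card_le_two
      omega)
    (by
      have : ({g₃, g₄} : Finset (Fin N)).card ≤ 2 := Finset.card_le_two
      omega)
  -- a₂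
  obtain ⟨a₂, ha₂A, ha₂T, ha₂E⟩ := pick_a A₂ T₂ {g₃, g₄, a₁} hd2 hT2
    (fun h5 => by
      rw [Finset.sdiff_nonempty]
      intro hsub
      have h1 := Finset.card_le_card hsub
      have h2 : ({g₃, g₄, a₁} : Finset (Fin N)).card ≤ 3 :=
        le_trans (Finset.card_insert_le _ _)
          (by have : ({g₄, a₁} : Finset (Fin N)).card ≤ 2 := Finset.card_le_two
              omega)
      omega)
    (by
      have h2 : ({g₃, g₄, a₁} : Finset (Fin N)).card ≤ 3 :=
        le_trans (Finset.card_insert_le _ _)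
          (by have : ({g₄, a₁} : Finset (Fin N)).card ≤ 2 := Finset.card_le_two
              omega)
      omega)
  -- a₃
  obtain ⟨a₃, ha₃A, ha₃T, ha₃E⟩ := pick_a A₃ T₃ {g₃, g₄, a₁, a₂} hd3 hT3
    (fun h5 => by
      rw [Finset.sdiff_nonempty]
      intro hsub
      have hsub' : T₃ ⊆ {g₄, a₁, a₂} := by
        intro t ht
        have := hsub ht
        simp only [Finset.mem_insert, Finset.mem_singleton] at this ⊢
        rcases this with h | h
        · exact absurd (h ▸ ht) hg₃.2
        · exact h
      have h1 := Finset.card_le_card hsub'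
      have h2 : ({g₄, a₁, a₂} : Finset (Fin N)).card ≤ 3 :=
        le_trans (Finset.card_insert_le _ _)
          (by have : ({a₁, a₂} : Finset (Fin N)).card ≤ 2 := Finset.card_le_two
              omega)
      omega)
    (by
      have h2 : ({g₃, g₄, a₁, a₂} : Finset (Fin N)).card ≤ 4 :=
        le_trans (Finset.card_insert_le _ _)
          (le_trans (Nat.succ_le_succ (Finset.card_insert_le _ _))
            (by have : ({a₁, a₂} : Finset (Fin N)).card ≤ 2 := Finset.card_le_two
                omega))
      omega)
  -- a₄
  obtain ⟨a₄, ha₄A, ha₄T, ha₄E⟩ := pick_a A₄ T₄ {g₃, g₄, a₁, a₂, a₃} hd4 hT4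
    (fun h5 => by
      rw [Finset.sdiff_nonempty]
      intro hsub
      have hsub' : T₄ ⊆ {g₃, a₁, a₂, a₃} := by
        intro t ht
        have := hsub ht
        simp only [Finset.mem_insert, Finset.mem_singleton] at this ⊢
        rcases this with h | h | h
        · exact Or.inl h
        · exact absurd (h ▸ ht) hg₄.2
        · exact Or.inr h
      have h1 := Finset.card_le_card hsub'
      have h2 : ({g₃, a₁, a₂, a₃} : Finset (Fin N)).card ≤ 4 :=
        le_trans (Finset.card_insert_le _ _)
          (le_trans (Nat.succ_le_succ (Finset.card_insert_le _ _))
            (by have : ({a₂, a₃} : Finset (Fin N)).card ≤ 2 := Finset.card_le_two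
                omega))
      omega)
    (by
      have h2 : ({g₃, g₄, a₁, a₂, a₃} : Finset (Fin N)).card ≤ 5 :=
        le_trans (Finset.card_insert_le _ _)
          (le_trans (Nat.succ_le_succ (Finset.card_insert_le _ _))
            (le_trans (Nat.succ_le_succ (Nat.succ_le_succ (Finset.card_insert_le _ _)))
              (by have : ({a₂, a₃} : Finset (Fin N)).card ≤ 2 :=
                    Finset.card_le_two
                  omega)))
      omega)
  simp only [Finset.mem_insert, Finset.mem_singleton] at ha₁E ha₂E ha₃E ha₄E
  push_neg at ha₁E ha₂E ha₃E ha₄E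
  -- b₁
  obtain ⟨b₁, hb₁⟩ := pick_avoid (A₁ ∪ insert a₁ T₁ ∪ {a₂, a₃, a₄})
    (by
      have h1 := Finset.card_union_le (A₁ ∪ insert a₁ T₁) ({a₂, a₃, a₄} : Finset (Fin N))
      have h2 := Finset.card_union_le A₁ (insert a₁ T₁)
      have h3 : ({a₂, a₃, a₄} : Finset (Fin N)).card ≤ 3 :=
        le_trans (Finset.card_insert_le _ _)
          (by have : ({a₃, a₄} : Finset (Fin N)).card ≤ 2 := Finset.card_le_two
              omega)
      omega)
  -- b₂
  obtain ⟨b₂, hb₂⟩ := pick_avoid (A₂ ∪ insert a₂ T₂ ∪ {a₁, a₃, a₄})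
    (by
      have h1 := Finset.card_union_le (A₂ ∪ insert a₂ T₂) ({a₁, a₃, a₄} : Finset (Fin N))
      have h2 := Finset.card_union_le A₂ (insert a₂ T₂)
      have h3 : ({a₁, a₃, a₄} : Finset (Fin N)).card ≤ 3 :=
        le_trans (Finset.card_insert_le _ _)
          (by have : ({a₃, a₄} : Finset (Fin N)).card ≤ 2 := Finset.card_le_two
              omega)
      omega)
  simp only [Finset.mem_union, Finset.mem_insert, Finset.mem_singleton] at hb₁ hb₂
  push_neg at hb₁ hb₂
  refine ⟨a₁, a₂, a₃, a₄, b₁, b₂, g₃, g₄,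
    ⟨fun h => ha₂E.2.2 h.symm, fun h => ha₃E.2.2.1 h.symm, fun h => ha₄E.2.2.1 h.symm,
     fun h => ha₃E.2.2.2 h.symm, fun h => ha₄E.2.2.2.1 h.symm, fun h => ha₄E.2.2.2.2 h.symm⟩,
    ⟨ha₁A, ha₁T⟩, ⟨ha₂A, ha₂T⟩, ⟨ha₃A, ha₃T⟩, ⟨ha₄A, ha₄T⟩,
    ⟨hb₁.1.1, hb₁.1.2.2, hb₁.1.2.1, hb₁.2.1, hb₁.2.2.1, hb₁.2.2.2⟩,
    ⟨hb₂.1.1, hb₂.1.2.2, hb₂.2.1, hb₂.1.2.1, hb₂.2.2.1, hb₂.2.2.2⟩,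
    ⟨hg₃.1, hg₃.2, fun h => ha₁E.1 h.symm, fun h => ha₂E.1 h.symm,
      fun h => ha₃E.1 h.symm, fun h => ha₄E.1 h.symm⟩,
    ⟨hg₄.1, hg₄.2, fun h => ha₁E.2 h.symm, fun h => ha₂E.2.1 h.symm,
      fun h => ha₃E.2.1 h.symm, fun h => ha₄E.2.1 h.symm⟩⟩



theorem incidence_extend_four_vertex_two_small {V : Type*} [Fintype V] [DecidableEq V]
    (G : SimpleGraph V) [DecidableRel G.Adj] (k : ℕ) (hk : 9 ≤ k) (hΔ : G.maxDegree ≤ k)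
    (v : V) (hdv : G.degree v = 4)
    (hnb : 2 ≤ ((G.neighborFinset v).filter (fun w => G.degree w ≤ 6)).card)
    (hcol : HasIncidenceColoring (G.induce ({v}ᶜ : Set V)) (k + 5) 5) :
    HasIncidenceColoring G (k + 5) 5 := by
  classical
  obtain ⟨φ₀, hφ₀, hℓ₀⟩ := hcol
  -- the four neighbors
  have hcard : (G.neighborFinset v).card = 4 := by
    rw [G.card_neighborFinset_eq_degree]; exact hdv
  obtain ⟨u₁, hu₁m, u₂, hu₂m, hne12⟩ := Finset.one_lt_card.mp
    (by omega : 1 < ((G.neighborFinset v).filter (fun w => G.degree w ≤ 6)).card)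
  rw [Finset.mem_filter] at hu₁m hu₂m
  obtain ⟨hu₁n, hdeg₁⟩ := hu₁m
  obtain ⟨hu₂n, hdeg₂⟩ := hu₂m
  have hrest : (((G.neighborFinset v).erase u₁).erase u₂).card = 2 := by
    rw [Finset.card_erase_of_mem (Finset.mem_erase.mpr ⟨hne12.symm, hu₂n⟩),
      Finset.card_erase_of_mem hu₁n, hcard]
  obtain ⟨u₃, hu₃m, u₄, hu₄m, hne34⟩ := Finset.one_lt_card.mp (by omega : 1 < (((G.neighborFinset v).erase u₁).erase u₂).card)
  rw [Finset.mem_erase, Finset.mem_erase] at hu₃m hu₄m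
  obtain ⟨hne32, hne31, hu₃n⟩ := hu₃m
  obtain ⟨hne42, hne41, hu₄n⟩ := hu₄m
  have hadj₁ : G.Adj v u₁ := (G.mem_neighborFinset v u₁).mp hu₁n
  have hadj₂ : G.Adj v u₂ := (G.mem_neighborFinset v u₂).mp hu₂n
  have hadj₃ : G.Adj v u₃ := (G.mem_neighborFinset v u₃).mp hu₃n
  have hadj₄ : G.Adj v u₄ := (G.mem_neighborFinset v u₄).mp hu₄n
  -- every neighbor of v is one of the four
  have hnbr : ∀ w, G.Adj v w → w = u₁ ∨ w = u₂ ∨ w = u₃ ∨ w = u₄ := by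
    intro w hw
    by_contra hcon
    push_neg at hcon
    obtain ⟨h1, h2, h3, h4⟩ := hcon
    have hsub : ({w, u₁, u₂, u₃, u₄} : Finset V) ⊆ G.neighborFinset v := by
      intro x hx
      simp only [Finset.mem_insert, Finset.mem_singleton] at hx
      rcases hx with rfl | rfl | rfl | rfl | rfl
      · exact (G.mem_neighborFinset v x).mpr hw
      · exact hu₁n
      · exact hu₂n
      · exact hu₃n
      · exact hu₄n
    have hc5 : ({w, u₁, u₂, u₃, u₄} : Finset V).card = 5 := by
      rw [Finset.card_insert_of_notMem (by simp [h1, h2, h3, h4]),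
        Finset.card_insert_of_notMem (by simp [hne12, hne31.symm, hne41.symm]),
        Finset.card_insert_of_notMem (by simp [hne32.symm, hne42.symm]),
        Finset.card_insert_of_notMem (by simp [hne34]), Finset.card_singleton]
    have := Finset.card_le_card hsub
    omega
  have hvne : ∀ w, G.Adj v w → w ≠ v := fun w hw => (G.ne_of_adj hw).symm
  have hvne₁ : u₁ ≠ v := hvne _ hadj₁
  have hvne₂ : u₂ ≠ v := hvne _ hadj₂
  have hvne₃ : u₃ ≠ v := hvne _ hadj₃
  have hvne₄ : u₄ ≠ v := hvne _ hadj₄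
  -- lift of φ₀ to V
  set d0 : Fin (k + 5) := ⟨0, by omega⟩ with hd0
  set ψ : V → V → Fin (k + 5) := fun x y =>
    if hx : x = v then d0 else if hy : y = v then d0 else
      φ₀ ⟨x, by simp [hx]⟩ ⟨y, by simp [hy]⟩ with hψ
  have hψeq : ∀ (x y : V) (hx : x ≠ v) (hy : y ≠ v),
      ψ x y = φ₀ ⟨x, by simp [hx]⟩ ⟨y, by simp [hy]⟩ := by
    intro x y hx hy
    simp only [hψ, dif_neg hx, dif_neg hy]
  -- the "from" and "toward" color sets
  set A : V → Finset (Fin (k + 5)) := fun u =>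
    ((G.neighborFinset u).erase v).image (fun w => ψ u w) with hA
  set T : V → Finset (Fin (k + 5)) := fun u =>
    ((G.neighborFinset u).erase v).image (fun w => ψ w u) with hT
  have hdegles : ∀ u, G.degree u ≤ k := fun u => le_trans (G.degree_le_maxDegree u) hΔ
  have hAcard : ∀ u, G.Adj v u → (A u).card ≤ G.degree u - 1 := by
    intro u hu
    calc (A u).card ≤ ((G.neighborFinset u).erase v).card := Finset.card_image_le
    _ = (G.neighborFinset u).card - 1 :=
      Finset.card_erase_of_mem ((G.mem_neighborFinset u v).mpr hu.symm)
    _ = G.degree u - 1 := by rw [G.card_neighborFinset_eq_degree]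
  -- toward sets have at most 5 colors
  have hTcard : ∀ u, u ≠ v → (T u).card ≤ 5 := by
    intro u hu
    have hsub : (↑(T u) : Set (Fin (k + 5))) ⊆
        {c | ∃ w, (G.induce ({v}ᶜ : Set V)).Adj w ⟨u, by simp [hu]⟩ ∧
          φ₀ w ⟨u, by simp [hu]⟩ = c} := by
      intro c hc
      simp only [Finset.coe_image, Set.mem_image, Finset.mem_coe, Finset.mem_erase,
        hT] at hc
      obtain ⟨w, ⟨hwv, hwn⟩, rfl⟩ := hc
      refine ⟨⟨w, by simp [hwv]⟩, ?_, ?_⟩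
      · exact ((G.mem_neighborFinset u w).mp hwn).symm
      · rw [hψeq w u hwv hu]
    calc (T u).card = (↑(T u) : Set (Fin (k+5))).ncard := (Set.ncard_coe_finset _).symm
    _ ≤ _ := Set.ncard_le_ncard hsub (Set.toFinite _)
    _ ≤ 5 := hℓ₀ _
  -- disjointness of A u and T u
  have hdisj : ∀ u, G.Adj v u → Disjoint (A u) (T u) := by
    intro u hu
    have huv : u ≠ v := hvne u hu
    rw [Finset.disjoint_left]
    intro c hcA hcT
    simp only [hA, hT, Finset.mem_image, Finset.mem_erase] at hcA hcT
    obtain ⟨x, ⟨hxv, hxn⟩, hcx⟩ := hcA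
    obtain ⟨w, ⟨hwv, hwn⟩, hcw⟩ := hcT
    have hux : G.Adj u x := (G.mem_neighborFinset u x).mp hxn
    have huw : G.Adj u w := (G.mem_neighborFinset u w).mp hwn
    rw [hψeq u x huv hxv] at hcx
    rw [hψeq w u hwv huv] at hcw
    refine hφ₀ (v := ⟨u, by simp [huv]⟩) (u := ⟨x, by simp [hxv]⟩)
      (w := ⟨w, by simp [hwv]⟩) (x := ⟨u, by simp [huv]⟩)
      (by simpa using hux) (by simpa using huw.symm) ?_ ?_ (by rw [hcx, hcw])
    · intro h
      have h2 : x = u := Subtype.ext_iff.mp (congrArg Prod.snd h)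
      exact hux.ne' h2
    · right; right; right
      exact Sym2.eq_swap

  have hN14 : 14 ≤ k + 5 := by omega
  obtain ⟨a₁, a₂, a₃, a₄, b₁, b₂, b₃, b₄, hadist, hP1, hP2, hP3, hP4, hQ1, hQ2, hQ3, hQ4⟩ :=
    selection hN14 (A u₁) (A u₂) (A u₃) (A u₄) (T u₁) (T u₂) (T u₃) (T u₄)
      (by have := hAcard u₁ hadj₁; omega)
      (by have := hAcard u₂ hadj₂; omega)
      (by have h := hAcard u₃ hadj₃; have := hdegles u₃; omega)
      (by have h := hAcard u₄ hadj₄; have := hdegles u₄; omega)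
      (hTcard u₁ hvne₁) (hTcard u₂ hvne₂) (hTcard u₃ hvne₃) (hTcard u₄ hvne₄)
      (hdisj u₁ hadj₁) (hdisj u₂ hadj₂) (hdisj u₃ hadj₃) (hdisj u₄ hadj₄)
  obtain ⟨h12, h13, h14, h23, h24, h34⟩ := hadist
  set va : V → Fin (k + 5) := fun w =>
    if w = u₁ then a₁ else if w = u₂ then a₂ else if w = u₃ then a₃ else a₄ with hvadef
  set vb : V → Fin (k + 5) := fun w =>
    if w = u₁ then b₁ else if w = u₂ then b₂ else if w = u₃ then b₃ else b₄ with hvbdef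
  have hva1 : va u₁ = a₁ := by simp [hvadef]
  have hva2 : va u₂ = a₂ := by simp [hvadef, hne12.symm]
  have hva3 : va u₃ = a₃ := by simp [hvadef, hne31, hne32]
  have hva4 : va u₄ = a₄ := by simp [hvadef, hne41, hne42, hne34.symm]
  have hvb1 : vb u₁ = b₁ := by simp [hvbdef]
  have hvb2 : vb u₂ = b₂ := by simp [hvbdef, hne12.symm]
  have hvb3 : vb u₃ = b₃ := by simp [hvbdef, hne31, hne32]
  have hvb4 : vb u₄ = b₄ := by simp [hvbdef, hne41, hne42, hne34.symm]
  have hvaA : ∀ w, G.Adj v w → va w ∉ A w := by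
    intro w hw
    rcases hnbr w hw with rfl | rfl | rfl | rfl
    · rw [hva1]; exact hP1.1
    · rw [hva2]; exact hP2.1
    · rw [hva3]; exact hP3.1
    · rw [hva4]; exact hP4.1
  have hvaT : ∀ w, G.Adj v w → (insert (va w) (T w)).card ≤ 5 := by
    intro w hw
    rcases hnbr w hw with rfl | rfl | rfl | rfl
    · rw [hva1]; exact hP1.2
    · rw [hva2]; exact hP2.2
    · rw [hva3]; exact hP3.2
    · rw [hva4]; exact hP4.2
  have hvainj : ∀ w w', G.Adj v w → G.Adj v w' → w ≠ w' → va w ≠ va w' := by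
    intro w w' hw hw' hneww
    rcases hnbr w hw with rfl | rfl | rfl | rfl <;>
      rcases hnbr w' hw' with rfl | rfl | rfl | rfl <;>
      simp only [hva1, hva2, hva3, hva4] <;>
      first
        | exact absurd rfl hneww
        | exact h12 | exact h13 | exact h14 | exact h23 | exact h24 | exact h34
        | exact h12.symm | exact h13.symm | exact h14.symm
        | exact h23.symm | exact h24.symm | exact h34.symm
  have hvbA : ∀ w, G.Adj v w → vb w ∉ A w ∧ vb w ∉ T w := by
    intro w hw
    rcases hnbr w hw with rfl | rfl | rfl | rfl
    · rw [hvb1]; exact ⟨hQ1.1, hQ1.2.1⟩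
    · rw [hvb2]; exact ⟨hQ2.1, hQ2.2.1⟩
    · rw [hvb3]; exact ⟨hQ3.1, hQ3.2.1⟩
    · rw [hvb4]; exact ⟨hQ4.1, hQ4.2.1⟩
  have hvbva : ∀ w w', G.Adj v w → G.Adj v w' → vb w ≠ va w' := by
    intro w w' hw hw'
    rcases hnbr w hw with rfl | rfl | rfl | rfl <;>
      rcases hnbr w' hw' with rfl | rfl | rfl | rfl <;>
      simp only [hva1, hva2, hva3, hva4, hvb1, hvb2, hvb3, hvb4] <;>
      first
        | exact hQ1.2.2.1 | exact hQ1.2.2.2.1 | exact hQ1.2.2.2.2.1 | exact hQ1.2.2.2.2.2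
        | exact hQ2.2.2.1 | exact hQ2.2.2.2.1 | exact hQ2.2.2.2.2.1 | exact hQ2.2.2.2.2.2
        | exact hQ3.2.2.1 | exact hQ3.2.2.2.1 | exact hQ3.2.2.2.2.1 | exact hQ3.2.2.2.2.2
        | exact hQ4.2.2.1 | exact hQ4.2.2.2.1 | exact hQ4.2.2.2.2.1 | exact hQ4.2.2.2.2.2
  -- the extended coloring
  set φ : V → V → Fin (k + 5) := fun x y =>
    if x = v then va y else if y = v then vb x else ψ x y with hφdef
  have hφv : ∀ y, φ v y = va y := by intro y; simp [hφdef]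
  have hφb : ∀ x, x ≠ v → φ x v = vb x := by intro x hx; simp [hφdef, hx]
  have hφold : ∀ x y, x ≠ v → y ≠ v → φ x y = ψ x y := by
    intro x y hx hy; simp [hφdef, hx, hy]
  -- membership helpers
  have hmemA : ∀ u x, G.Adj u x → u ≠ v → x ≠ v → ψ u x ∈ A u := by
    intro u x hux hu hx
    rw [hA]
    exact Finset.mem_image.mpr ⟨x, Finset.mem_erase.mpr
      ⟨hx, (G.mem_neighborFinset u x).mpr hux⟩, rfl⟩
  have hmemT : ∀ u w, G.Adj u w → u ≠ v → w ≠ v → ψ w u ∈ T u := by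
    intro u w hux hu hw
    rw [hT]
    exact Finset.mem_image.mpr ⟨w, Finset.mem_erase.mpr
      ⟨hw, (G.mem_neighborFinset u w).mpr hux⟩, rfl⟩
  have hsym2 : ∀ p q r s : V,
      (p = r ∨ s(p, q) = s(r, s) ∨ s(p, r) = s(p, q) ∨ s(p, r) = s(r, s)) →
      (r = p ∨ s(r, s) = s(p, q) ∨ s(r, p) = s(r, s) ∨ s(r, p) = s(p, q)) := by
    intro p q r s h
    rcases h with h | h | h | h
    · exact Or.inl h.symm
    · exact Or.inr (Or.inl h.symm)
    · exact Or.inr (Or.inr (Or.inr (Sym2.eq_swap.trans h)))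
    · exact Or.inr (Or.inr (Or.inl (Sym2.eq_swap.trans h)))
  have key : ∀ p q r s : V, G.Adj p q → G.Adj r s → (p, q) ≠ (r, s) →
      (p = r ∨ s(p, q) = s(r, s) ∨ s(p, r) = s(p, q) ∨ s(p, r) = s(r, s)) →
      (p = v ∨ q = v) → φ p q ≠ φ r s := by
    intro p q r s hpq hrs hne hD hfirst
    rcases hfirst with hfp | hfq
    · subst p
      -- p = v
      rw [hφv q]
      by_cases hr : r = v
      · subst hr
        rw [hφv s]
        have hqs : q ≠ s := by
          intro h; exact hne (by rw [h])
        exact hvainj q s hpq hrs hqs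
      · by_cases hs : s = v
        · subst hs
          rw [hφb r hr]
          exact (hvbva r q hrs.symm hpq).symm
        · rw [hφold r s hr hs]
          have hrq : r = q := by
            rcases hD with h | h | h | h
            · exact absurd h.symm hr
            · rw [Sym2.eq_iff] at h
              rcases h with ⟨h1, _⟩ | ⟨h1, _⟩
              · exact absurd h1.symm hr
              · exact absurd h1.symm hs
            · rw [Sym2.eq_iff] at h
              rcases h with ⟨_, h2⟩ | ⟨_, h2⟩
              · exact h2
              · exact absurd h2 hr
            · rw [Sym2.eq_iff] at h
              rcases h with ⟨h1, _⟩ | ⟨h1, _⟩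
              · exact absurd h1.symm hr
              · exact absurd h1.symm hs
          subst r
          intro h
          exact hvaA q hpq (h ▸ hmemA q s hrs hr hs)
    · subst q
      -- q = v
      have hp : p ≠ v := hpq.ne
      rw [hφb p hp]
      by_cases hr : r = v
      · subst hr
        rw [hφv s]
        exact hvbva p s hpq.symm hrs
      · by_cases hs : s = v
        · subst hs
          exfalso
          rcases hD with h | h | h | h
          · exact hne (by rw [h])
          · rw [Sym2.eq_iff] at h
            rcases h with ⟨h1, _⟩ | ⟨h1, h2⟩
            · exact hne (by rw [h1])
            · exact hp h1
          · rw [Sym2.eq_iff] at h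
            rcases h with ⟨_, h2⟩ | ⟨h1, _⟩
            · exact hr h2
            · exact hp h1
          · rw [Sym2.eq_iff] at h
            rcases h with ⟨_, h2⟩ | ⟨h1, _⟩
            · exact hr h2
            · exact hp h1
        · rw [hφold r s hr hs]
          rcases hD with h | h | h | h
          · subst h
            intro hc
            exact (hvbA p hpq.symm).1 (hc ▸ hmemA p s hrs hp hs)
          · exfalso
            rw [Sym2.eq_iff] at h
            rcases h with ⟨_, h2⟩ | ⟨_, h2⟩
            · exact hs h2.symm
            · exact hr h2.symm
          · exfalso
            rw [Sym2.eq_iff] at h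
            rcases h with ⟨_, h2⟩ | ⟨h1, _⟩
            · exact hr h2
            · exact hp h1
          · rw [Sym2.eq_iff] at h
            rcases h with ⟨h1, h2⟩ | ⟨h1, _⟩
            · exact absurd h2 hrs.ne
            · subst h1
              intro hc
              exact (hvbA p hpq.symm).2 (hc ▸ hmemT p r hrs.symm hp hr)
  refine ⟨φ, ?_, ?_⟩
  · -- incidence coloring
    intro p q r s hpq hrs hne hD
    by_cases h1 : p = v ∨ q = v
    · exact key p q r s hpq hrs hne hD h1
    · push_neg at h1
      by_cases h2 : r = v ∨ s = v
      · exact (key r s p q hrs hpq (Ne.symm hne) (hsym2 p q r s hD) h2).symm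
      · push_neg at h2
        rw [hφold p q h1.1 h1.2, hφold r s h2.1 h2.2,
          hψeq p q h1.1 h1.2, hψeq r s h2.1 h2.2]
        refine hφ₀ (v := ⟨p, by simp [h1.1]⟩) (u := ⟨q, by simp [h1.2]⟩)
          (w := ⟨r, by simp [h2.1]⟩) (x := ⟨s, by simp [h2.2]⟩)
          (by exact hpq) (by exact hrs) ?_ ?_
        · intro h
          apply hne
          have hh1 : p = r := congrArg (fun t => t.1.1) h
          have hh2 : q = s := congrArg (fun t => t.2.1) h
          rw [hh1, hh2]
        · simp only [Sym2.eq_iff, Subtype.mk.injEq]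
          simp only [Sym2.eq_iff] at hD
          exact hD
  · -- ell condition
    intro w
    by_cases hwv : w = v
    · subst hwv
      have hsub : {c | ∃ u, G.Adj u w ∧ φ u w = c} ⊆
          ↑((G.neighborFinset w).image vb) := by
        rintro c ⟨u, hu, rfl⟩
        rw [hφb u hu.ne]
        exact Finset.mem_coe.mpr (Finset.mem_image.mpr
          ⟨u, (G.mem_neighborFinset w u).mpr hu.symm, rfl⟩)
      calc ({c | ∃ u, G.Adj u w ∧ φ u w = c}).ncard
          ≤ (↑((G.neighborFinset w).image vb) : Set (Fin (k+5))).ncard :=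
            Set.ncard_le_ncard hsub (Set.toFinite _)
        _ = ((G.neighborFinset w).image vb).card := Set.ncard_coe_finset _
        _ ≤ (G.neighborFinset w).card := Finset.card_image_le
        _ ≤ 5 := by rw [hcard]; omega
    · by_cases hwn : G.Adj v w
      · have hsub : {c | ∃ u, G.Adj u w ∧ φ u w = c} ⊆
            ↑(insert (va w) (T w)) := by
          rintro c ⟨u, hu, rfl⟩
          by_cases huv : u = v
          · subst huv
            rw [hφv w]
            exact Finset.mem_coe.mpr (Finset.mem_insert_self _ _)
          · rw [hφold u w huv hwv]
            exact Finset.mem_coe.mpr (Finset.mem_insert_of_mem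
              (hmemT w u hu.symm hwv huv))
        calc ({c | ∃ u, G.Adj u w ∧ φ u w = c}).ncard
            ≤ (↑(insert (va w) (T w)) : Set (Fin (k+5))).ncard :=
              Set.ncard_le_ncard hsub (Set.toFinite _)
          _ = (insert (va w) (T w)).card := Set.ncard_coe_finset _
          _ ≤ 5 := hvaT w hwn
      · have hsub : {c | ∃ u, G.Adj u w ∧ φ u w = c} ⊆
            {c | ∃ u', (G.induce ({v}ᶜ : Set V)).Adj u' ⟨w, by simp [hwv]⟩ ∧
              φ₀ u' ⟨w, by simp [hwv]⟩ = c} := by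
          rintro c ⟨u, hu, rfl⟩
          have huv : u ≠ v := by
            intro h; subst h; exact hwn hu
          rw [hφold u w huv hwv, hψeq u w huv hwv]
          exact ⟨⟨u, by simp [huv]⟩, by exact hu, rfl⟩
        calc ({c | ∃ u, G.Adj u w ∧ φ u w = c}).ncard
            ≤ _ := Set.ncard_le_ncard hsub (Set.toFinite _)
          _ ≤ 5 := hℓ₀ _
end

section
/- Let k ≥ 7 be an integer and let G be a finite simple graph with Δ(G) ≤ k. Suppose G contains a vertex v of degree 4 having at least one neighbor of degree at most Δ(G) − 1. If G − v admits an incidence (k+6, 6)-coloring, then G admits an incidence (k+6, 6)-coloring. -/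
open SimpleGraph

section IncidenceExtendHelpers

open Finset

section Selection
variable {α : Type*} [DecidableEq α]

lemma exists_not_mem_of_card_lt {s t : Finset α} (hlt : t.card < s.card) :
    ∃ x ∈ s, x ∉ t := by
  have h2 : (s \ t).Nonempty := by
    rw [← Finset.card_pos]
    have := Finset.card_le_card_sdiff_add_card (s := s) (t := t)
    omega
  obtain ⟨x, hx⟩ := h2
  exact ⟨x, (Finset.mem_sdiff.mp hx).1, (Finset.mem_sdiff.mp hx).2⟩

lemma pick4 (D : Fin 4 → Finset α)
    (h : ∀ i, i ≠ 0 → 3 ≤ (D i).card) (h0 : 4 ≤ (D 0).card) :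
    ∃ b : Fin 4 → α, Function.Injective b ∧ ∀ i, b i ∈ D i := by
  obtain ⟨b1, hb1, -⟩ := exists_not_mem_of_card_lt (s := D 1) (t := ∅) (by
    have := h 1 (by decide); simp only [Finset.card_empty]; omega)
  obtain ⟨b2, hb2, hb2'⟩ := exists_not_mem_of_card_lt (s := D 2) (t := {b1}) (by
    have := h 2 (by decide); simp only [Finset.card_singleton]; omega)
  obtain ⟨b3, hb3, hb3'⟩ := exists_not_mem_of_card_lt (s := D 3) (t := {b1, b2}) (by
    have h3 := h 3 (by decide)
    have hc : ({b1, b2} : Finset α).card ≤ 2 := Finset.card_le_two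
    omega)
  obtain ⟨b0, hb0, hb0'⟩ := exists_not_mem_of_card_lt (s := D 0) (t := {b1, b2, b3}) (by
    have hc : ({b1, b2, b3} : Finset α).card ≤ 3 := Finset.card_le_three
    omega)
  simp only [Finset.mem_insert, Finset.mem_singleton, not_or] at hb2' hb3' hb0'
  refine ⟨![b0, b1, b2, b3], ?_, ?_⟩
  · intro i j hij
    fin_cases i <;> fin_cases j <;> simp_all
  · intro i; fin_cases i <;> simpa

lemma D_mem {Bi Ci : Finset α} (hBi : Bi.card ≤ 6) {x : α}
    (hx : x ∈ (if Bi.card = 6 then Bi else Bi ∪ Ci)) :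
    x ∈ Bi ∪ Ci ∧ (insert x Bi).card ≤ 6 := by
  split at hx
  · rename_i h6
    refine ⟨Finset.mem_union_left _ hx, ?_⟩
    rw [Finset.insert_eq_self.mpr hx]
    omega
  · refine ⟨hx, ?_⟩
    have := Finset.card_insert_le x Bi
    omega

lemma Dbound {Bi Ci : Finset α} (hdisj : ∀ x ∈ Ci, x ∉ Bi)
    (hBCi : 7 ≤ Bi.card + Ci.card) {W : Finset α} (hWcard : W.card ≤ 4)
    {wi : α} (hwi : wi ∈ Ci) (hwiW : wi ∈ W) :
    3 ≤ ((if Bi.card = 6 then Bi else Bi ∪ Ci) \ W).card := by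
  split
  · rename_i h6
    have hsub : Bi ∩ W ⊆ W.erase wi := by
      intro x hx
      rw [Finset.mem_inter] at hx
      rw [Finset.mem_erase]
      exact ⟨fun h => hdisj _ hwi (h ▸ hx.1), hx.2⟩
    have h1 : (Bi ∩ W).card ≤ 3 := by
      have := Finset.card_le_card hsub
      have := Finset.card_erase_of_mem hwiW
      omega
    have h2 := Finset.card_inter_add_card_sdiff Bi W
    omega
  · have hu : (Bi ∪ Ci).card = Bi.card + Ci.card := by
      rw [Finset.card_union_of_disjoint]
      rw [Finset.disjoint_right]
      intro x hx
      exact hdisj x hx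
    have hkey2 := Finset.card_le_card_sdiff_add_card (s := Bi ∪ Ci) (t := W)
    omega

/-- The conclusion of the selection lemma. -/
def SelConc (B C : Fin 4 → Finset α) : Prop :=
  ∃ b a : Fin 4 → α, Function.Injective b ∧
    (∀ i, b i ∈ B i ∪ C i) ∧
    (∀ i, (insert (b i) (B i)).card ≤ 6) ∧
    (∀ i, a i ∈ C i) ∧
    (∀ i j, a i ≠ b j)

lemma greedy_case (B C : Fin 4 → Finset α)
    (hdisj : ∀ i, ∀ x ∈ C i, x ∉ B i)
    (hB : ∀ i, (B i).card ≤ 6)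
    (hBC : ∀ i, 7 ≤ (B i).card + (C i).card)
    (hBC0 : 8 ≤ (B 0).card + (C 0).card)
    (w : Fin 4 → α) (hw : ∀ i, w i ∈ C i)
    (hsmall : (B 0).card = 6 → ((B 0) ∩ (Finset.image w Finset.univ)).card ≤ 2) :
    SelConc B C := by
  set W : Finset α := Finset.image w Finset.univ with hW
  have hwW : ∀ i, w i ∈ W := fun i => Finset.mem_image_of_mem w (Finset.mem_univ i)
  have hWcard : W.card ≤ 4 := by
    have := Finset.card_image_le (s := (Finset.univ : Finset (Fin 4))) (f := w)
    simpa using this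
  have hDcard : ∀ i, i ≠ 0 →
      3 ≤ ((if (B i).card = 6 then B i else B i ∪ C i) \ W).card := by
    intro i _
    exact Dbound (hdisj i) (hBC i) hWcard (hw i) (hwW i)
  have hDcard0 : 4 ≤ ((if (B 0).card = 6 then B 0 else B 0 ∪ C 0) \ W).card := by
    split
    · rename_i h6
      have h1 := hsmall h6
      have h2 := Finset.card_inter_add_card_sdiff (B 0) W
      omega
    · have hu : (B 0 ∪ C 0).card = (B 0).card + (C 0).card := by
        rw [Finset.card_union_of_disjoint]
        rw [Finset.disjoint_right]
        intro x hx
        exact hdisj 0 x hx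
      have hkey2 := Finset.card_le_card_sdiff_add_card (s := B 0 ∪ C 0) (t := W)
      omega
  obtain ⟨b, hbinj, hbmem⟩ :=
    pick4 (fun i => (if (B i).card = 6 then B i else B i ∪ C i) \ W) hDcard hDcard0
  have hbD := fun i => D_mem (hB i) (Finset.mem_sdiff.mp (hbmem i)).1
  refine ⟨b, w, hbinj, fun i => (hbD i).1, fun i => (hbD i).2, hw, ?_⟩
  · intro i j h
    exact (Finset.mem_sdiff.mp (hbmem j)).2 (h ▸ hwW i)


lemma selection_s17 (B C : Fin 4 → Finset α)
    (hdisj : ∀ i, ∀ x ∈ C i, x ∉ B i)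
    (hB : ∀ i, (B i).card ≤ 6)
    (hBC : ∀ i, 7 ≤ (B i).card + (C i).card)
    (hBC0 : 8 ≤ (B 0).card + (C 0).card) :
    SelConc B C := by
  classical
  have hCne : ∀ i, (C i).Nonempty := fun i =>
    Finset.card_pos.mp (by have := hBC i; have := hB i; omega)
  choose w0 hw0 using hCne
  by_cases h6 : (B 0).card = 6
  swap
  · exact greedy_case B C hdisj hB hBC hBC0 w0 hw0 (fun h => absurd h h6)
  by_cases hIIa : ∀ j, j ≠ 0 → C j ⊆ B 0
  swap
  · -- Case II.a : some C j (j ≠ 0) has an element outside B 0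
    push_neg at hIIa
    obtain ⟨j, hj0, hnotsub⟩ := hIIa
    obtain ⟨x, hxC, hxB⟩ := Finset.not_subset.mp hnotsub
    set w : Fin 4 → α := fun i => if i = j then x else w0 i with hwdef
    have hw : ∀ i, w i ∈ C i := by
      intro i
      simp only [hwdef]
      split
      · rename_i h; exact h ▸ hxC
      · exact hw0 i
    apply greedy_case B C hdisj hB hBC hBC0 w hw
    intro _
    have hsub : B 0 ∩ Finset.image w Finset.univ ⊆
        Finset.image w (Finset.univ \ {0, j}) := by
      intro c hc
      rw [Finset.mem_inter] at hc
      obtain ⟨i, -, hi⟩ := Finset.mem_image.mp hc.2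
      have hi0 : i ≠ 0 := by
        rintro rfl
        have hww : w 0 = w0 0 := by simp [hwdef, Ne.symm hj0]
        exact hdisj 0 _ (hw0 0) (by rw [← hww, hi]; exact hc.1)
      have hij : i ≠ j := by
        rintro rfl
        have hww : w i = x := by simp [hwdef]
        exact hxB (by rw [← hww, hi]; exact hc.1)
      exact Finset.mem_image.mpr ⟨i, by simp [hi0, hij], hi⟩
    calc (B 0 ∩ Finset.image w Finset.univ).card
        ≤ (Finset.image w (Finset.univ \ {0, j})).card := Finset.card_le_card hsub
      _ ≤ (Finset.univ \ ({0, j} : Finset (Fin 4))).card := Finset.card_image_le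
      _ ≤ 2 := by
          rw [Finset.card_sdiff_of_subset (by intro t _; exact Finset.mem_univ t)]
          have h2 : ({0, j} : Finset (Fin 4)).card = 2 := by
            rw [Finset.card_insert_of_notMem
              (by simp only [Finset.mem_singleton]; exact fun h => hj0 h.symm)]
            simp
          simp [h2]
  by_cases hIIbi : ∀ j l : Fin 4, j ≠ 0 → l ≠ 0 → j ≠ l → ∀ y ∈ C j, y ∉ C l
  swap
  · -- Case II.b.i : two of the C j (j ≠ 0) intersect; use a common witness
    push_neg at hIIbi
    obtain ⟨j, l, hj0, hl0, hjl, y, hyj, hyl⟩ := hIIbi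
    set w : Fin 4 → α := fun i => if i = j ∨ i = l then y else w0 i with hwdef
    have hw : ∀ i, w i ∈ C i := by
      intro i
      simp only [hwdef]
      split
      · rename_i h; rcases h with rfl | rfl
        · exact hyj
        · exact hyl
      · exact hw0 i
    apply greedy_case B C hdisj hB hBC hBC0 w hw
    intro _
    have hsub : B 0 ∩ Finset.image w Finset.univ ⊆
        Finset.image w (Finset.univ \ {0, l}) := by
      intro c hc
      rw [Finset.mem_inter] at hc
      obtain ⟨i, -, hi⟩ := Finset.mem_image.mp hc.2
      have hi0 : i ≠ 0 := by
        rintro rfl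
        have hww : w 0 = w0 0 := by
          simp only [hwdef]
          rw [if_neg]
          push_neg
          exact ⟨Ne.symm hj0, Ne.symm hl0⟩
        exact hdisj 0 _ (hw0 0) (by rw [← hww, hi]; exact hc.1)
      by_cases hil : i = l
      · subst hil
        have hww : w i = w j := by simp [hwdef]
        exact Finset.mem_image.mpr ⟨j, by simp [hj0, hjl], by rw [← hww]; exact hi⟩
      · exact Finset.mem_image.mpr ⟨i, by simp [hi0, hil], hi⟩
    calc (B 0 ∩ Finset.image w Finset.univ).card
        ≤ (Finset.image w (Finset.univ \ {0, l})).card := Finset.card_le_card hsub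
      _ ≤ (Finset.univ \ ({0, l} : Finset (Fin 4))).card := Finset.card_image_le
      _ ≤ 2 := by
          rw [Finset.card_sdiff_of_subset (by intro t _; exact Finset.mem_univ t)]
          have h2 : ({0, l} : Finset (Fin 4)).card = 2 := by
            rw [Finset.card_insert_of_notMem
              (by simp only [Finset.mem_singleton]; exact fun h => hl0 h.symm)]
            simp
          simp [h2]
  -- Case II.b.ii
  · set w : Fin 4 → α := w0 with hwdef
    have hw : ∀ i, w i ∈ C i := hw0
    have hwB0 : ∀ j, j ≠ 0 → w j ∈ B 0 := fun j hj => hIIa j hj (hw j)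
    have hw0nB0 : w 0 ∉ B 0 := hdisj 0 _ (hw 0)
    have hwne0 : ∀ j, j ≠ 0 → w 0 ≠ w j := by
      intro j hj h
      exact hw0nB0 (h ▸ hwB0 j hj)
    have hwnejl : ∀ j l, j ≠ 0 → l ≠ 0 → j ≠ l → w j ≠ w l := by
      intro j l hj hl hjl h
      exact hIIbi j l hj hl hjl (w j) (hw j) (h ▸ hw l)
    have hwinj : Function.Injective w := by
      intro p q h
      by_contra hpq
      by_cases hp0 : p = 0
      · subst hp0
        have hq0 : q ≠ 0 := fun hq => hpq hq.symm
        exact hwne0 q hq0 h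
      · by_cases hq0 : q = 0
        · subst hq0
          exact hwne0 p hp0 h.symm
        · exact hwnejl p q hp0 hq0 hpq h
    set W : Finset α := Finset.image w Finset.univ with hW
    have hwW : ∀ i, w i ∈ W := fun i => Finset.mem_image_of_mem w (Finset.mem_univ i)
    have hWcard : W.card = 4 := by
      rw [hW, Finset.card_image_of_injective _ hwinj]
      simp
    set R : Finset α := B 0 \ W with hR
    have hRB0 : R ⊆ B 0 := Finset.sdiff_subset
    have hRW : ∀ x ∈ R, x ∉ W := by
      intro x hx
      exact (Finset.mem_sdiff.mp hx).2
    have hB0W : B 0 ∩ W = W.erase (w 0) := by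
      apply Finset.Subset.antisymm
      · intro c hc
        rw [Finset.mem_inter] at hc
        rw [Finset.mem_erase]
        exact ⟨fun h => hw0nB0 (h ▸ hc.1), hc.2⟩
      · intro c hc
        rw [Finset.mem_erase] at hc
        obtain ⟨hc0, hcW⟩ := hc
        obtain ⟨i, -, hi⟩ := Finset.mem_image.mp hcW
        have hi0 : i ≠ 0 := by rintro rfl; exact hc0 hi.symm
        rw [Finset.mem_inter]
        exact ⟨hi ▸ hwB0 i hi0, hcW⟩
    have hR3 : R.card = 3 := by
      have h1 := Finset.card_inter_add_card_sdiff (B 0) W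
      have h2 : (B 0 ∩ W).card = 3 := by
        rw [hB0W, Finset.card_erase_of_mem (hwW 0), hWcard]
      rw [← hR] at h1
      omega
    have hQ : ∀ j, j ≠ 0 →
        3 ≤ ((if (B j).card = 6 then B j else B j ∪ C j) \ W).card := by
      intro j _
      exact Dbound (hdisj j) (hBC j) (le_of_eq hWcard) (hw j) (hwW j)
    by_cases halpha : ∀ j, j ≠ 0 → (if (B j).card = 6 then B j else B j ∪ C j) \ W ⊆ R
    swap
    · -- α-case
      push_neg at halpha
      obtain ⟨j, hj0, hnotsub⟩ := halpha
      obtain ⟨x, hxQ, hxR⟩ := Finset.not_subset.mp hnotsub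
      have key : ∀ j1 j2 j3 : Fin 4, j1 ≠ 0 → j2 ≠ 0 → j3 ≠ 0 →
          j1 ≠ j2 → j1 ≠ j3 → j2 ≠ j3 →
          (∀ x' ∈ (if (B j1).card = 6 then B j1 else B j1 ∪ C j1) \ W,
            x' ∉ R → SelConc B C) := by
        intro j1 j2 j3 hj1 hj2 hj3 h12 h13 h23 x' hx'Q hx'R
        obtain ⟨b2, hb2Q, hb2x⟩ := exists_not_mem_of_card_lt
          (s := (if (B j2).card = 6 then B j2 else B j2 ∪ C j2) \ W) (t := {x'}) (by
            have := hQ j2 hj2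
            simp only [Finset.card_singleton]
            omega)
        obtain ⟨b3, hb3Q, hb3x⟩ := exists_not_mem_of_card_lt
          (s := (if (B j3).card = 6 then B j3 else B j3 ∪ C j3) \ W) (t := {x', b2}) (by
            have h1 := hQ j3 hj3
            have h2 : ({x', b2} : Finset α).card ≤ 2 := Finset.card_le_two
            omega)
        obtain ⟨b0, hb0R, hb0x⟩ := exists_not_mem_of_card_lt (s := R) (t := {b2, b3}) (by
            have h2 : ({b2, b3} : Finset α).card ≤ 2 := Finset.card_le_two
            omega)
        simp only [Finset.mem_insert, Finset.mem_singleton, not_or] at hb2x hb3x hb0x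
        have hcover : ∀ i : Fin 4, i = 0 ∨ i = j1 ∨ i = j2 ∨ i = j3 := by
          have hc4 : ({0, j1, j2, j3} : Finset (Fin 4)).card = 4 := by
            rw [Finset.card_insert_of_notMem (by
              simp only [Finset.mem_insert, Finset.mem_singleton]
              push_neg
              exact ⟨Ne.symm hj1, Ne.symm hj2, Ne.symm hj3⟩)]
            rw [Finset.card_insert_of_notMem (by
              simp only [Finset.mem_insert, Finset.mem_singleton]
              push_neg
              exact ⟨h12, h13⟩)]
            rw [Finset.card_insert_of_notMem (by
              simp only [Finset.mem_singleton]
              exact h23)]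
            simp
          have huniv : ({0, j1, j2, j3} : Finset (Fin 4)) = Finset.univ :=
            Finset.eq_univ_of_card _ (by rw [hc4]; simp)
          intro i
          have hm : i ∈ ({0, j1, j2, j3} : Finset (Fin 4)) := huniv ▸ Finset.mem_univ i
          simpa using hm
        set b : Fin 4 → α := fun i =>
          if i = 0 then b0 else if i = j1 then x' else if i = j2 then b2 else b3 with hbdef
        have hbval0 : b 0 = b0 := by simp [hbdef]
        have hbval1 : b j1 = x' := by simp [hbdef, hj1]
        have hbval2 : b j2 = b2 := by simp [hbdef, hj2, Ne.symm h12]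
        have hbval3 : b j3 = b3 := by simp [hbdef, hj3, Ne.symm h13, Ne.symm h23]
        have hbD : ∀ i, b i ∈ (if (B i).card = 6 then B i else B i ∪ C i) := by
          intro i
          rcases hcover i with rfl | rfl | rfl | rfl
          · rw [hbval0, if_pos h6]
            exact hRB0 hb0R
          · rw [hbval1]; exact (Finset.mem_sdiff.mp hx'Q).1
          · rw [hbval2]; exact (Finset.mem_sdiff.mp hb2Q).1
          · rw [hbval3]; exact (Finset.mem_sdiff.mp hb3Q).1
        have hbnW : ∀ i, b i ∉ W := by
          intro i
          rcases hcover i with rfl | rfl | rfl | rfl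
          · rw [hbval0]; exact hRW _ hb0R
          · rw [hbval1]; exact (Finset.mem_sdiff.mp hx'Q).2
          · rw [hbval2]; exact (Finset.mem_sdiff.mp hb2Q).2
          · rw [hbval3]; exact (Finset.mem_sdiff.mp hb3Q).2
        have hbinj : Function.Injective b := by
          intro p q h
          by_contra hpq
          rcases hcover p with rfl | rfl | rfl | rfl <;>
            rcases hcover q with rfl | rfl | rfl | rfl <;>
            simp only [hbval0, hbval1, hbval2, hbval3] at h <;>
            first
              | exact hpq rfl
              | exact hx'R (h ▸ hb0R)
              | exact hx'R (h.symm ▸ hb0R)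
              | exact hb0x.1 h | exact hb0x.1 h.symm
              | exact hb0x.2 h | exact hb0x.2 h.symm
              | exact hb2x h | exact hb2x h.symm
              | exact hb3x.1 h | exact hb3x.1 h.symm
              | exact hb3x.2 h | exact hb3x.2 h.symm
        have hbDm := fun i => D_mem (hB i) (hbD i)
        exact ⟨b, w, hbinj, fun i => (hbDm i).1, fun i => (hbDm i).2, hw,
          fun i l' h => hbnW l' (h ▸ hwW i)⟩
      fin_cases j
      · exact absurd rfl hj0
      · exact key 1 2 3 (by decide) (by decide) (by decide) (by decide) (by decide) (by decide)
          x hxQ hxR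
      · exact key 2 1 3 (by decide) (by decide) (by decide) (by decide) (by decide) (by decide)
          x hxQ hxR
      · exact key 3 1 2 (by decide) (by decide) (by decide) (by decide) (by decide) (by decide)
          x hxQ hxR
    · -- β-case
      have hQeq : ∀ j, j ≠ 0 → (if (B j).card = 6 then B j else B j ∪ C j) \ W = R := by
        intro j hj
        exact Finset.eq_of_subset_of_card_le (halpha j hj) (by rw [hR3]; exact hQ j hj)
      have hw0D : ∀ j, j ≠ 0 → w 0 ∈ (if (B j).card = 6 then B j else B j ∪ C j) := by
        intro j hj
        have h1 := Finset.card_inter_add_card_sdiff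
          (if (B j).card = 6 then B j else B j ∪ C j) W
        rw [hQeq j hj, hR3] at h1
        by_cases h6j : (B j).card = 6
        · rw [if_pos h6j] at h1 ⊢
          have hsub : B j ∩ W ⊆ W.erase (w j) := by
            intro c hc
            rw [Finset.mem_inter] at hc
            rw [Finset.mem_erase]
            exact ⟨fun h => hdisj j _ (hw j) (h ▸ hc.1), hc.2⟩
          have hecard : (W.erase (w j)).card = 3 := by
            rw [Finset.card_erase_of_mem (hwW j), hWcard]
          have heq : B j ∩ W = W.erase (w j) :=
            Finset.eq_of_subset_of_card_le hsub (by omega)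
          have hmm : w 0 ∈ W.erase (w j) := by
            rw [Finset.mem_erase]
            exact ⟨hwne0 j hj, hwW 0⟩
          rw [← heq] at hmm
          exact (Finset.mem_inter.mp hmm).1
        · rw [if_neg h6j] at h1 ⊢
          have hu : (B j ∪ C j).card = (B j).card + (C j).card := by
            rw [Finset.card_union_of_disjoint]
            rw [Finset.disjoint_right]
            intro c hc
            exact hdisj j c hc
          have hcard7 : 7 ≤ (B j ∪ C j).card := by rw [hu]; exact hBC j
          have hWsub : (B j ∪ C j) ∩ W = W := by
            apply Finset.eq_of_subset_of_card_le Finset.inter_subset_right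
            omega
          have hm : w 0 ∈ (B j ∪ C j) ∩ W := by rw [hWsub]; exact hwW 0
          exact (Finset.mem_inter.mp hm).1
      obtain ⟨r1, r2, r3, hr12, hr13, hr23, hReq⟩ := Finset.card_eq_three.mp hR3
      have hrR : r1 ∈ R ∧ r2 ∈ R ∧ r3 ∈ R := by
        refine ⟨?_, ?_, ?_⟩ <;> rw [hReq] <;> simp
      have hz : ∃ z ∈ C 0, z ≠ w 0 := by
        have hlt : 1 < (C 0).card := by omega
        obtain ⟨z, hz1, hz2⟩ := Finset.exists_mem_ne hlt (w 0)
        exact ⟨z, hz1, hz2⟩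
      obtain ⟨z, hzC, hzw0⟩ := hz
      have four : ∀ i : Fin 4, i = 0 ∨ i = 1 ∨ i = 2 ∨ i = 3 := by decide
      set b : Fin 4 → α := ![r1, w 0, r2, r3] with hbdef
      have hbv0 : b 0 = r1 := rfl
      have hbv1 : b 1 = w 0 := rfl
      have hbv2 : b 2 = r2 := rfl
      have hbv3 : b 3 = r3 := rfl
      have hbD : ∀ i, b i ∈ (if (B i).card = 6 then B i else B i ∪ C i) := by
        intro i
        rcases four i with rfl | rfl | rfl | rfl
        · rw [hbv0, if_pos h6]
          exact hRB0 hrR.1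
        · rw [hbv1]
          exact hw0D 1 (by decide)
        · rw [hbv2]
          have hm : r2 ∈ (if (B 2).card = 6 then B 2 else B 2 ∪ C 2) \ W := by
            rw [hQeq 2 (by decide)]
            exact hrR.2.1
          exact (Finset.mem_sdiff.mp hm).1
        · rw [hbv3]
          have hm : r3 ∈ (if (B 3).card = 6 then B 3 else B 3 ∪ C 3) \ W := by
            rw [hQeq 3 (by decide)]
            exact hrR.2.2
          exact (Finset.mem_sdiff.mp hm).1
      have hw0R : ∀ r ∈ R, w 0 ≠ r := by
        intro r hr h
        exact hw0nB0 (h ▸ hRB0 hr)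
      have hbinj : Function.Injective b := by
        intro p q h
        by_contra hpq
        rcases four p with rfl | rfl | rfl | rfl <;>
          rcases four q with rfl | rfl | rfl | rfl <;>
          simp only [hbv0, hbv1, hbv2, hbv3] at h <;>
          first
            | exact hpq rfl
            | exact hw0R r1 hrR.1 h.symm
            | exact hw0R r1 hrR.1 h
            | exact hr12 h | exact hr12 h.symm
            | exact hr13 h | exact hr13 h.symm
            | exact hw0R r2 hrR.2.1 h | exact hw0R r2 hrR.2.1 h.symm
            | exact hw0R r3 hrR.2.2 h | exact hw0R r3 hrR.2.2 h.symm
            | exact hr23 h | exact hr23 h.symm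
      set a : Fin 4 → α := fun i => if i = 0 then z else w i with hadef
      have haC : ∀ i, a i ∈ C i := by
        intro i
        simp only [hadef]
        split
        · rename_i h; exact h ▸ hzC
        · exact hw i
      have hab : ∀ i l, a i ≠ b l := by
        intro i l
        have hzR : ∀ r ∈ R, z ≠ r := by
          intro r hr h
          exact hdisj 0 z hzC (h ▸ hRB0 hr)
        have hwjR : ∀ j' r, r ∈ R → w j' ≠ r := by
          intro j' r hr h
          exact hRW r hr (h ▸ hwW j')
        simp only [hadef]
        split
        · rcases four l with rfl | rfl | rfl | rfl
          · rw [hbv0]; exact hzR r1 hrR.1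
          · rw [hbv1]; exact hzw0
          · rw [hbv2]; exact hzR r2 hrR.2.1
          · rw [hbv3]; exact hzR r3 hrR.2.2
        · rename_i hi0
          rcases four l with rfl | rfl | rfl | rfl
          · rw [hbv0]; exact hwjR i r1 hrR.1
          · rw [hbv1]
            intro h
            exact hi0 (hwinj h)
          · rw [hbv2]; exact hwjR i r2 hrR.2.1
          · rw [hbv3]; exact hwjR i r3 hrR.2.2
      have hbDm := fun i => D_mem (hB i) (hbD i)
      exact ⟨b, a, hbinj, fun i => (hbDm i).1, fun i => (hbDm i).2, haC, hab⟩


end Selection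

lemma rel_simp {V : Type*} {x y z t : V} (h1 : x ≠ y)
    (hrel : x = z ∨ s(x,y) = s(z,t) ∨ s(x,z) = s(x,y) ∨ s(x,z) = s(z,t)) :
    x = z ∨ z = y ∨ x = t := by
  rcases hrel with h | h | h | h
  · exact Or.inl h
  · rcases Sym2.eq_iff.mp h with ⟨ha, hb⟩ | ⟨ha, hb⟩
    · exact Or.inl ha
    · exact Or.inr (Or.inr ha)
  · rcases Sym2.eq_iff.mp h with ⟨-, hb⟩ | ⟨ha, hb⟩
    · exact Or.inr (Or.inl hb)
    · exact absurd ha h1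
  · rcases Sym2.eq_iff.mp h with ⟨ha, -⟩ | ⟨ha, -⟩
    · exact Or.inl ha
    · exact Or.inr (Or.inr ha)

lemma rel_intro {V : Type*} {S : Set V} {x y z t : V}
    (hx : x ∈ S) (hy : y ∈ S) (hz : z ∈ S) (ht : t ∈ S)
    (h : x = z ∨ z = y ∨ x = t) :
    (⟨x, hx⟩ : S) = ⟨z, hz⟩ ∨
      s((⟨x, hx⟩ : S), (⟨y, hy⟩ : S)) = s((⟨z, hz⟩ : S), (⟨t, ht⟩ : S)) ∨
      s((⟨x, hx⟩ : S), (⟨z, hz⟩ : S)) = s((⟨x, hx⟩ : S), (⟨y, hy⟩ : S)) ∨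
      s((⟨x, hx⟩ : S), (⟨z, hz⟩ : S)) = s((⟨z, hz⟩ : S), (⟨t, ht⟩ : S)) := by
  rcases h with h | h | h
  · exact Or.inl (Subtype.ext h)
  · subst h
    exact Or.inr (Or.inr (Or.inl rfl))
  · subst h
    exact Or.inr (Or.inr (Or.inr (Sym2.eq_swap)))

end IncidenceExtendHelpers

open Finset in
theorem incidence_extend_four_vertex_one_small {V : Type*} [Fintype V] (G : SimpleGraph V)
    [DecidableRel G.Adj] (k : ℕ) (hk : 7 ≤ k) (hΔ : G.maxDegree ≤ k)
    (v : V) (hdv : G.degree v = 4)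
    (hnb : ∃ w : V, G.Adj v w ∧ G.degree w ≤ G.maxDegree - 1)
    (hcol : HasIncidenceColoring (G.induce ({v}ᶜ : Set V)) (k + 6) 6) :
    HasIncidenceColoring G (k + 6) 6 := by
  classical
  obtain ⟨φ, hφ, hφℓ⟩ := hcol
  obtain ⟨w₀, hw₀adj, hw₀deg⟩ := hnb
  -- enumerate the four neighbors of v, with w₀ first
  have hw₀s : w₀ ∈ G.neighborFinset v := (SimpleGraph.mem_neighborFinset _ _ _).mpr hw₀adj
  have hs4 : (G.neighborFinset v).card = 4 := hdv
  have her3 : ((G.neighborFinset v).erase w₀).card = 3 := by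
    rw [Finset.card_erase_of_mem hw₀s, hs4]
  obtain ⟨x1, x2, x3, h12, h13, h23, herase⟩ := Finset.card_eq_three.mp her3
  set w : Fin 4 → V := ![w₀, x1, x2, x3] with hwdef
  have four : ∀ i : Fin 4, i = 0 ∨ i = 1 ∨ i = 2 ∨ i = 3 := by decide
  have hxer : x1 ∈ (G.neighborFinset v).erase w₀ ∧ x2 ∈ (G.neighborFinset v).erase w₀ ∧
      x3 ∈ (G.neighborFinset v).erase w₀ := by
    refine ⟨?_, ?_, ?_⟩ <;> rw [herase] <;> simp
  have hws : ∀ i, w i ∈ G.neighborFinset v := by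
    intro i
    rcases four i with rfl | rfl | rfl | rfl
    · exact hw₀s
    · exact Finset.mem_of_mem_erase hxer.1
    · exact Finset.mem_of_mem_erase hxer.2.1
    · exact Finset.mem_of_mem_erase hxer.2.2
  have hadjv : ∀ i, G.Adj v (w i) := fun i => (SimpleGraph.mem_neighborFinset _ _ _).mp (hws i)
  have hwv : ∀ i, w i ≠ v := fun i => (hadjv i).ne'
  have hxne : x1 ≠ w₀ ∧ x2 ≠ w₀ ∧ x3 ≠ w₀ :=
    ⟨(Finset.mem_erase.mp hxer.1).1, (Finset.mem_erase.mp hxer.2.1).1,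
      (Finset.mem_erase.mp hxer.2.2).1⟩
  have hwinj : Function.Injective w := by
    intro p q h
    by_contra hpq
    rcases four p with rfl | rfl | rfl | rfl <;> rcases four q with rfl | rfl | rfl | rfl <;>
      simp only [hwdef, Matrix.cons_val_zero, Matrix.cons_val_one, Matrix.head_cons,
        Matrix.cons_val_two, Matrix.tail_cons, Matrix.cons_val_three] at h <;>
      first
        | exact hpq rfl
        | exact hxne.1 h.symm | exact hxne.1 h
        | exact hxne.2.1 h.symm | exact hxne.2.1 h
        | exact hxne.2.2 h.symm | exact hxne.2.2 h
        | exact h12 h | exact h12 h.symm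
        | exact h13 h | exact h13 h.symm
        | exact h23 h | exact h23 h.symm
  have hsurj : ∀ x, G.Adj v x → ∃ i, w i = x := by
    intro x hx
    have hxs : x ∈ G.neighborFinset v := (SimpleGraph.mem_neighborFinset _ _ _).mpr hx
    by_cases hxw : x = w₀
    · exact ⟨0, hxw.symm⟩
    · have : x ∈ (G.neighborFinset v).erase w₀ := Finset.mem_erase.mpr ⟨hxw, hxs⟩
      rw [herase] at this
      simp only [Finset.mem_insert, Finset.mem_singleton] at this
      rcases this with rfl | rfl | rfl
      · exact ⟨1, rfl⟩
      · exact ⟨2, rfl⟩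
      · exact ⟨3, rfl⟩
  have hmemc : ∀ {x : V}, x ≠ v → x ∈ ({v}ᶜ : Set V) := fun hx => hx
  -- the color sets
  set A : Fin 4 → Finset (Fin (k+6)) := fun i =>
    Finset.image (fun y : {z // z ∈ (G.neighborFinset (w i)).erase v} =>
      φ ⟨w i, hmemc (hwv i)⟩ ⟨y.1, hmemc (Finset.mem_erase.mp y.2).1⟩) Finset.univ with hA
  set B : Fin 4 → Finset (Fin (k+6)) := fun i =>
    Finset.image (fun y : {z // z ∈ (G.neighborFinset (w i)).erase v} =>
      φ ⟨y.1, hmemc (Finset.mem_erase.mp y.2).1⟩ ⟨w i, hmemc (hwv i)⟩) Finset.univ with hB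
  set C : Fin 4 → Finset (Fin (k+6)) := fun i => (A i ∪ B i)ᶜ with hC
  have hAmem : ∀ i y (hy : G.Adj (w i) y) (hyv : y ≠ v),
      φ ⟨w i, hmemc (hwv i)⟩ ⟨y, hmemc hyv⟩ ∈ A i := by
    intro i y hy hyv
    rw [hA]
    exact Finset.mem_image.mpr
      ⟨⟨y, Finset.mem_erase.mpr ⟨hyv, (SimpleGraph.mem_neighborFinset _ _ _).mpr hy⟩⟩,
        Finset.mem_univ _, rfl⟩
  have hBmem : ∀ i y (hy : G.Adj (w i) y) (hyv : y ≠ v),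
      φ ⟨y, hmemc hyv⟩ ⟨w i, hmemc (hwv i)⟩ ∈ B i := by
    intro i y hy hyv
    rw [hB]
    exact Finset.mem_image.mpr
      ⟨⟨y, Finset.mem_erase.mpr ⟨hyv, (SimpleGraph.mem_neighborFinset _ _ _).mpr hy⟩⟩,
        Finset.mem_univ _, rfl⟩
  have hAmem' : ∀ i c, c ∈ A i → ∃ y : V, ∃ (hy : G.Adj (w i) y) (hyv : y ≠ v),
      φ ⟨w i, hmemc (hwv i)⟩ ⟨y, hmemc hyv⟩ = c := by
    intro i c hc
    rw [hA] at hc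
    obtain ⟨⟨y, hy2⟩, -, hEq⟩ := Finset.mem_image.mp hc
    obtain ⟨hyv, hys⟩ := Finset.mem_erase.mp hy2
    exact ⟨y, (SimpleGraph.mem_neighborFinset _ _ _).mp hys, hyv, hEq⟩
  have hBmem' : ∀ i c, c ∈ B i → ∃ y : V, ∃ (hy : G.Adj (w i) y) (hyv : y ≠ v),
      φ ⟨y, hmemc hyv⟩ ⟨w i, hmemc (hwv i)⟩ = c := by
    intro i c hc
    rw [hB] at hc
    obtain ⟨⟨y, hy2⟩, -, hEq⟩ := Finset.mem_image.mp hc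
    obtain ⟨hyv, hys⟩ := Finset.mem_erase.mp hy2
    exact ⟨y, (SimpleGraph.mem_neighborFinset _ _ _).mp hys, hyv, hEq⟩
  -- transfer of the coloring property to V-level data
  have hφ' : ∀ (p q r t : V) (hp : p ≠ v) (hq : q ≠ v) (hr : r ≠ v) (ht : t ≠ v),
      G.Adj p q → G.Adj r t → (p, q) ≠ (r, t) → (p = r ∨ r = q ∨ p = t) →
      φ ⟨p, hmemc hp⟩ ⟨q, hmemc hq⟩ ≠ φ ⟨r, hmemc hr⟩ ⟨t, hmemc ht⟩ := by
    intro p q r t hp hq hr ht hpq hrt hne hrel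
    refine hφ (v := ⟨p, hmemc hp⟩) (u := ⟨q, hmemc hq⟩) (w := ⟨r, hmemc hr⟩)
      (x := ⟨t, hmemc ht⟩) hpq hrt ?_ (rel_intro _ _ _ _ hrel)
    intro hEq
    apply hne
    rw [Prod.mk.injEq] at hEq ⊢
    exact ⟨Subtype.ext_iff.mp hEq.1, Subtype.ext_iff.mp hEq.2⟩
  have hABdisj : ∀ i c, c ∈ B i → c ∉ A i := by
    intro i c hcB hcA
    obtain ⟨y, hy, hyv, hEqB⟩ := hBmem' i c hcB
    obtain ⟨y', hy', hyv', hEqA⟩ := hAmem' i c hcA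
    refine hφ' (w i) y' y (w i) (hwv i) hyv' hyv (hwv i) hy' hy.symm ?_ (Or.inr (Or.inr rfl))
      (by rw [hEqA, hEqB])
    intro hEq
    rw [Prod.mk.injEq] at hEq
    exact hy.ne hEq.1
  -- cardinalities
  have hdegk : ∀ i, G.degree (w i) ≤ k := fun i => le_trans (G.degree_le_maxDegree (w i)) hΔ
  have hdegpos : ∀ i, 1 ≤ G.degree (w i) := by
    intro i
    rw [← SimpleGraph.card_neighborFinset_eq_degree]
    exact Finset.card_pos.mpr ⟨v, (SimpleGraph.mem_neighborFinset _ _ _).mpr (hadjv i).symm⟩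
  have hAcard : ∀ i, (A i).card + 1 ≤ G.degree (w i) := by
    intro i
    have h1 : (A i).card ≤ Fintype.card {z // z ∈ (G.neighborFinset (w i)).erase v} := by
      rw [hA]
      exact le_trans (Finset.card_image_le) (by rw [Finset.card_univ])
    rw [Fintype.card_coe] at h1
    have h2 : ((G.neighborFinset (w i)).erase v).card = G.degree (w i) - 1 := by
      rw [Finset.card_erase_of_mem
        ((SimpleGraph.mem_neighborFinset _ _ _).mpr (hadjv i).symm)]
      rw [SimpleGraph.card_neighborFinset_eq_degree]
    have := hdegpos i
    omega
  have hA0card : (A 0).card + 2 ≤ k := by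
    have h1 := hAcard 0
    have hw0 : w 0 = w₀ := rfl
    have h2 : G.degree (w 0) ≤ k - 1 := by
      rw [hw0]
      have := hw₀deg
      have hΔ4 : 4 ≤ G.maxDegree := hdv ▸ G.degree_le_maxDegree v
      omega
    have := hdegpos 0
    omega
  have hBcard : ∀ i, (B i).card ≤ 6 := by
    intro i
    have hsub : (↑(B i) : Set (Fin (k+6))) ⊆
        {c | ∃ u, (G.induce ({v}ᶜ : Set V)).Adj u ⟨w i, hmemc (hwv i)⟩ ∧
          φ u ⟨w i, hmemc (hwv i)⟩ = c} := by
      intro c hc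
      obtain ⟨y, hy, hyv, hEq⟩ := hBmem' i c (by simpa using hc)
      exact ⟨⟨y, hmemc hyv⟩, hy.symm, hEq⟩
    calc (B i).card = (↑(B i) : Set (Fin (k+6))).ncard := (Set.ncard_coe_finset _).symm
      _ ≤ _ := Set.ncard_le_ncard hsub (Set.toFinite _)
      _ ≤ 6 := hφℓ ⟨w i, hmemc (hwv i)⟩
  have hCBdisj : ∀ i, ∀ c ∈ C i, c ∉ B i := by
    intro i c hc
    rw [hC] at hc
    simp only [Finset.mem_compl, Finset.mem_union] at hc
    exact fun h => hc (Or.inr h)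
  have hCAdisj : ∀ i, ∀ c ∈ C i, c ∉ A i := by
    intro i c hc
    rw [hC] at hc
    simp only [Finset.mem_compl, Finset.mem_union] at hc
    exact fun h => hc (Or.inl h)
  have hCcard : ∀ i, (C i).card = (k + 6) - (A i ∪ B i).card := by
    intro i
    rw [hC, Finset.card_compl, Fintype.card_fin]
  have hABun : ∀ i, (A i ∪ B i).card ≤ (A i).card + (B i).card := fun i =>
    Finset.card_union_le _ _
  have hBCcard : ∀ i, 7 ≤ (B i).card + (C i).card := by
    intro i
    have h1 := hCcard i
    have h2 := hABun i
    have h3 := hAcard i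
    have h4 := hdegk i
    omega
  have hBC0card : 8 ≤ (B 0).card + (C 0).card := by
    have h1 := hCcard 0
    have h2 := hABun 0
    have h3 := hA0card
    have h4 := hBcard 0
    omega
  obtain ⟨b, a, hbinj, hbBC, hbins, haC, hab⟩ :=
    selection_s17 B C hCBdisj hBcard hBCcard hBC0card
  have hbA : ∀ i, b i ∉ A i := by
    intro i hbi
    rcases Finset.mem_union.mp (hbBC i) with h | h
    · exact hABdisj i _ h hbi
    · exact hCAdisj i _ h hbi
  have haA : ∀ i, a i ∉ A i := fun i => hCAdisj i _ (haC i)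
  have haB : ∀ i, a i ∉ B i := fun i => hCBdisj i _ (haC i)
  -- the extended coloring
  have hk0 : 0 < k + 6 := by omega
  set c₀ : Fin (k+6) := ⟨0, hk0⟩ with hc₀
  set ψ : V → V → Fin (k + 6) := fun x y =>
    if hx : x = v then (if h : ∃ i, w i = y then b h.choose else c₀)
    else if hy : y = v then (if h : ∃ i, w i = x then a h.choose else c₀)
    else φ ⟨x, hmemc hx⟩ ⟨y, hmemc hy⟩ with hψ
  have hchoose : ∀ (i : Fin 4) (h : ∃ j, w j = w i), h.choose = i :=
    fun i h => hwinj h.choose_spec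
  have hψb : ∀ i, ψ v (w i) = b i := by
    intro i
    have h : ∃ j, w j = w i := ⟨i, rfl⟩
    simp only [hψ]
    rw [dif_pos trivial, dif_pos h]
    exact congrArg b (hchoose i h)
  have hψa : ∀ i, ψ (w i) v = a i := by
    intro i
    have h : ∃ j, w j = w i := ⟨i, rfl⟩
    simp only [hψ]
    rw [dif_neg (hwv i), dif_pos trivial, dif_pos h]
    exact congrArg a (hchoose i h)
  have hψo : ∀ x y (hx : x ≠ v) (hy : y ≠ v),
      ψ x y = φ ⟨x, hmemc hx⟩ ⟨y, hmemc hy⟩ := by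
    intro x y hx hy
    simp only [hψ]
    rw [dif_neg hx, dif_neg hy]
  refine ⟨ψ, ?_, ?_⟩
  · -- incidence coloring property
    intro x y z t hadj1 hadj2 hne hrel
    have hrel' : x = z ∨ z = y ∨ x = t := rel_simp hadj1.ne hrel
    by_cases hx : x = v
    · obtain rfl := hx.symm
      obtain ⟨i, rfl⟩ := hsurj y hadj1
      rw [hψb i]
      by_cases hz : z = v
      · obtain rfl := hz.symm
        obtain ⟨j, rfl⟩ := hsurj t hadj2
        rw [hψb j]
        have hij : i ≠ j := fun hij' => hne (by rw [hij'])
        exact fun h => hij (hbinj h)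
      · by_cases ht : t = v
        · obtain rfl := ht.symm
          obtain ⟨j, rfl⟩ := hsurj z hadj2.symm
          rw [hψa j]
          exact (hab j i).symm
        · rw [hψo z t hz ht]
          rcases hrel' with h | h | h
          · exact absurd h.symm hz
          · subst h
            intro hEq
            apply hbA i
            rw [hEq]
            exact hAmem i t hadj2 ht
          · exact absurd h.symm ht
    · by_cases hy : y = v
      · obtain rfl := hy.symm
        obtain ⟨i, rfl⟩ := hsurj x hadj1.symm
        rw [hψa i]
        by_cases hz : z = v
        · obtain rfl := hz.symm
          obtain ⟨j, rfl⟩ := hsurj t hadj2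
          rw [hψb j]
          exact hab i j
        · by_cases ht : t = v
          · obtain rfl := ht.symm
            obtain ⟨j, rfl⟩ := hsurj z hadj2.symm
            exfalso
            rcases hrel' with h | h | h
            · exact hne (by rw [h])
            · exact hz h
            · exact hwv i h
          · rw [hψo z t hz ht]
            rcases hrel' with h | h | h
            · intro hEq
              apply haA i
              rw [hEq]
              have hadj2' : G.Adj (w i) t := h ▸ hadj2
              have hmm := hAmem i t hadj2' ht
              convert hmm using 3
              exact h.symm
            · exact absurd h hz
            · intro hEq
              apply haB i
              rw [hEq]
              have hadj2' : G.Adj z (w i) := by rw [h]; exact hadj2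
              have hmm := hBmem i z hadj2'.symm hz
              convert hmm using 3
              exact h.symm
      · rw [hψo x y hx hy]
        by_cases hz : z = v
        · obtain rfl := hz.symm
          obtain ⟨j, rfl⟩ := hsurj t hadj2
          rw [hψb j]
          rcases hrel' with h | h | h
          · exact absurd h hx
          · exact absurd h.symm hy
          · subst h
            intro hEq
            apply hbA j
            rw [← hEq]
            exact hAmem j y hadj1 hy
        · by_cases ht : t = v
          · obtain rfl := ht.symm
            obtain ⟨j, rfl⟩ := hsurj z hadj2.symm
            rw [hψa j]
            rcases hrel' with h | h | h
            · subst h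
              intro hEq
              apply haA j
              rw [← hEq]
              exact hAmem j y hadj1 hy
            · intro hEq
              apply haB j
              rw [← hEq]
              have hadj1' : G.Adj x (w j) := by rw [h]; exact hadj1
              have hmm := hBmem j x hadj1'.symm hx
              convert hmm using 3
              exact h.symm
            · exact absurd h hx
          · rw [hψo z t hz ht]
            exact hφ' x y z t hx hy hz ht hadj1 hadj2 hne hrel'
  · -- the (·, 6) condition
    intro u
    by_cases hu : u = v
    · obtain rfl := hu.symm
      have hsub : {c : Fin (k+6) | ∃ x, G.Adj x v ∧ ψ x v = c} ⊆
          (↑({a 0, a 1, a 2, a 3} : Finset (Fin (k+6))) : Set (Fin (k+6))) := by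
        rintro c ⟨x, hadj, rfl⟩
        obtain ⟨i, rfl⟩ := hsurj x hadj.symm
        rw [hψa i]
        rcases four i with rfl | rfl | rfl | rfl <;> simp
      calc ({c : Fin (k+6) | ∃ x, G.Adj x v ∧ ψ x v = c}).ncard
          ≤ (↑({a 0, a 1, a 2, a 3} : Finset (Fin (k+6))) : Set (Fin (k+6))).ncard :=
            Set.ncard_le_ncard hsub (Set.toFinite _)
        _ = ({a 0, a 1, a 2, a 3} : Finset (Fin (k+6))).card := Set.ncard_coe_finset _
        _ ≤ 6 := by
            have h1 := Finset.card_insert_le (a 0) ({a 1, a 2, a 3} : Finset (Fin (k+6)))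
            have h2 := Finset.card_insert_le (a 1) ({a 2, a 3} : Finset (Fin (k+6)))
            have h3 := Finset.card_insert_le (a 2) ({a 3} : Finset (Fin (k+6)))
            have h4 : ({a 3} : Finset (Fin (k+6))).card = 1 := Finset.card_singleton _
            omega
    · by_cases hu2 : ∃ i, w i = u
      · obtain ⟨i, rfl⟩ := hu2
        have hsub : {c : Fin (k+6) | ∃ x, G.Adj x (w i) ∧ ψ x (w i) = c} ⊆
            (↑(insert (b i) (B i)) : Set (Fin (k+6))) := by
          rintro c ⟨x, hadj, rfl⟩
          simp only [Finset.coe_insert, Set.mem_insert_iff, Finset.mem_coe]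
          by_cases hxv : x = v
          · obtain rfl := hxv.symm
            rw [hψb i]
            exact Or.inl rfl
          · rw [hψo x (w i) hxv (hwv i)]
            exact Or.inr (hBmem i x hadj.symm hxv)
        calc ({c : Fin (k+6) | ∃ x, G.Adj x (w i) ∧ ψ x (w i) = c}).ncard
            ≤ (↑(insert (b i) (B i)) : Set (Fin (k+6))).ncard :=
              Set.ncard_le_ncard hsub (Set.toFinite _)
          _ = (insert (b i) (B i)).card := Set.ncard_coe_finset _
          _ ≤ 6 := hbins i
      · have hsub : {c : Fin (k+6) | ∃ x, G.Adj x u ∧ ψ x u = c} ⊆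
            {c : Fin (k+6) | ∃ p, (G.induce ({v}ᶜ : Set V)).Adj p ⟨u, hmemc hu⟩ ∧
              φ p ⟨u, hmemc hu⟩ = c} := by
          rintro c ⟨x, hadj, rfl⟩
          have hxv : x ≠ v := by
            rintro rfl
            exact hu2 (hsurj u hadj)
          rw [hψo x u hxv hu]
          exact ⟨⟨x, hmemc hxv⟩, hadj, rfl⟩
        calc ({c : Fin (k+6) | ∃ x, G.Adj x u ∧ ψ x u = c}).ncard
            ≤ _ := Set.ncard_le_ncard hsub (Set.toFinite _)
          _ ≤ 6 := hφℓ ⟨u, hmemc hu⟩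
end
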